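/- arXiv:2108.06405 — 3 statements merged into one kernel-verified Lean document; each statement's English description precedes it below -/
import Mathlib

section
/- Let P be a logic program over a set of atoms 𝒜 and let φ be a CNF formula over 𝒜 ∪ ℬ (with ℬ disjoint from 𝒜) such that SM(P) = {M ∩ 𝒜 | M is a model of φ}. Then for every prefix 𝒬 = Q₀X₀…QₙXₙ all of whose sets Xᵢ are subsets of 𝒜, the quantified logic program 𝒬P is satisfiable if and only if the quantified Boolean formula 𝒬φ is satisfiable. -/
namespace ASP

universe u v

variable {α : Type u} {β : Type v}

/-- A literal over atoms `α`: an atom or its default negation. -/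
inductive Lit (α : Type u) where
  | pos (a : α)
  | neg (a : α)

/-- Satisfaction of a literal by a set of atoms. -/
def Lit.sat (X : Set α) : Lit α → Prop
  | .pos a => a ∈ X
  | .neg a => a ∉ X

/-- The atom occurring in a literal. -/
def Lit.atomOf : Lit α → α
  | .pos a => a
  | .neg a => a

/-- The head of a rule: an atom (normal rule), a choice `{p}`, or `⊥` (constraint). -/
inductive Head (α : Type u) where
  | atom (a : α)
  | choice (a : α)
  | bot

def Head.atoms : Head α → Set α
  | .atom a => {a}
  | .choice a => {a}
  | .bot => ∅

/-- A rule `H ← B` with head `H` and body `B`, a set of literals. -/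
structure Rule (α : Type u) where
  head : Head α
  body : Set (Lit α)

/-- A logic program is a set of rules. -/
abbrev Program (α : Type u) := Set (Rule α)

def ruleAtoms (r : Rule α) : Set α := r.head.atoms ∪ Lit.atomOf '' r.body

def progAtoms (P : Program α) : Set α := ⋃ r ∈ P, ruleAtoms r

/-- `M` satisfies the `X`-reduct of a literal, i.e. the literal where any literal
not satisfied by `X` has been replaced by `⊥`. -/
def Lit.redSat (X M : Set α) (l : Lit α) : Prop := l.sat X ∧ l.sat M

/-- `M` satisfies the `X`-reduct of a head (`{p}` is read as `p ∨ ¬ p`). -/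
def Head.redSat (X M : Set α) : Head α → Prop
  | .atom a => a ∈ X ∧ a ∈ M
  | .choice a => (a ∈ X ∧ a ∈ M) ∨ (a ∉ X ∧ a ∉ M)
  | .bot => False

/-- `M` is a model of the formula obtained from `P` by replacing every literal
not satisfied by `X` with `⊥`. -/
def redModel (P : Program α) (X M : Set α) : Prop :=
  ∀ r ∈ P, (∀ l ∈ r.body, l.redSat X M) → r.head.redSat X M

/-- `X` is a stable model of `P`: a subset-minimal model of the `X`-reduct of `P`. -/
def StableModel (P : Program α) (X : Set α) : Prop :=
  redModel P X X ∧ ∀ M, M ⊆ X → redModel P X M → M = X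

/-- The set of stable models of a program. -/
def SM (P : Program α) : Set (Set α) := {X | StableModel P X}

/-- A program is satisfiable if it has a stable model. -/
def Satisfiable (P : Program α) : Prop := ∃ X, StableModel P X

def Head.clSat (M : Set α) : Head α → Prop
  | .atom a => a ∈ M
  | .choice _ => True
  | .bot => False

/-- `M` is a (classical) model of `P`, reading rules as implications. -/
def IsModel (P : Program α) (M : Set α) : Prop :=
  ∀ r ∈ P, (∀ l ∈ r.body, l.sat M) → r.head.clSat M

/-- `fixcons X Y = {⊥ ← not x | x ∈ X} ∪ {⊥ ← x | x ∈ Y \ X}`. -/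
def fixcons (X Y : Set α) : Program α :=
  {r | (∃ x ∈ X, r = ⟨Head.bot, {Lit.neg x}⟩) ∨ (∃ x ∈ Y \ X, r = ⟨Head.bot, {Lit.pos x}⟩)}

/-- A set of atoms identified with the corresponding facts. -/
def factsOf (X : Set α) : Program α := {r | ∃ x ∈ X, r = ⟨Head.atom x, ∅⟩}

/-- Quantifiers. -/
inductive Quant where
  | ex
  | fa

/-- Satisfiability of a quantified logic program, given by its prefix (a list of
quantified sets of atoms) and its program. -/
def QLPSat : List (Quant × Set α) → Program α → Prop
  | [], P => Satisfiable P
  | (Quant.ex, X) :: Q, P => ∃ Y, Y ⊆ X ∧ QLPSat Q (P ∪ fixcons Y X)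
  | (Quant.fa, X) :: Q, P => ∀ Y, Y ⊆ X → QLPSat Q (P ∪ fixcons Y X)

/-- `r` has head atom `p` (either `p` or `{p}`). -/
def headAtomIs (r : Rule α) (p : α) : Prop :=
  r.head = Head.atom p ∨ r.head = Head.choice p

def posEdge (P : Program α) (p q : α) : Prop :=
  ∃ r ∈ P, headAtomIs r q ∧ Lit.pos p ∈ r.body

def negEdge (P : Program α) (p q : α) : Prop :=
  ∃ r ∈ P, headAtomIs r q ∧ Lit.neg p ∈ r.body

def depEdge (P : Program α) (p q : α) : Prop := posEdge P p q ∨ negEdge P p q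

/-- The dependency graph of `P` has no cycle involving a negative edge. -/
def Stratified (P : Program α) : Prop :=
  ¬ ∃ p q, negEdge P p q ∧ Relation.ReflTransGen (depEdge P) q p

/-- `P` is in GDT form: it is stratified and all its choice rules have the form
`{p} ←` with `p` occurring in the head of no other rule. -/
def GDT (P : Program α) : Prop :=
  Stratified P ∧ ∀ r ∈ P, ∀ p, r.head = Head.choice p →
    r.body = ∅ ∧ ∀ r' ∈ P, r' ≠ r → ¬ headAtomIs r' p

/-- A clause: a set of literals. -/
abbrev Clause (α : Type u) := Set (Lit α)

/-- A CNF formula: a set of clauses. -/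
abbrev CNF (α : Type u) := Set (Clause α)

def clauseSat (M : Set α) (c : Clause α) : Prop := ∃ l ∈ c, l.sat M

def CnfModel (φ : CNF α) (M : Set α) : Prop := ∀ c ∈ φ, clauseSat M c

def CnfSat (φ : CNF α) : Prop := ∃ M, CnfModel φ M

def clauseAtoms (c : Clause α) : Set α := Lit.atomOf '' c

def cnfAtoms (φ : CNF α) : Set α := ⋃ c ∈ φ, clauseAtoms c

/-- `fixbf X Y = {{p} | p ∈ X} ∪ {{¬p} | p ∈ Y \ X}`. -/
def fixbf (X Y : Set α) : CNF α :=
  {c | (∃ p ∈ X, c = {Lit.pos p}) ∨ (∃ p ∈ Y \ X, c = {Lit.neg p})}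

/-- Satisfiability of a QBF in prenex CNF, given by prefix and matrix. -/
def QBFSat : List (Quant × Set α) → CNF α → Prop
  | [], φ => CnfSat φ
  | (Quant.ex, X) :: Q, φ => ∃ Y, Y ⊆ X ∧ QBFSat Q (φ ∪ fixbf Y X)
  | (Quant.fa, X) :: Q, φ => ∀ Y, Y ⊆ X → QBFSat Q (φ ∪ fixbf Y X)

def mapLit (g : α → β) : Lit α → Lit β
  | .pos a => .pos (g a)
  | .neg a => .neg (g a)

def mapHead (g : α → β) : Head α → Head β
  | .atom a => .atom (g a)
  | .choice a => .choice (g a)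
  | .bot => .bot

def mapRule (g : α → β) (r : Rule α) : Rule β :=
  ⟨mapHead g r.head, mapLit g '' r.body⟩

/-- Rename the atoms of a program along `g`. -/
def mapProg (g : α → β) (P : Program α) : Program β := mapRule g '' P

/-- Add the literals in `L` to the body of every rule of `P`. -/
def addBody (L : Set (Lit α)) (P : Program α) : Program α :=
  {r | ∃ r' ∈ P, r = ⟨r'.head, r'.body ∪ L⟩}

def replBotHead (p : α) : Rule α → Rule α
  | ⟨Head.bot, B⟩ => ⟨Head.atom p, B⟩
  | r => r

/-- Replace `⊥` in the head of every integrity constraint of `P` by the atom `p`. -/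
def botTo (p : α) (P : Program α) : Program α := replBotHead p '' P

def choiceRules (P : Program α) : Program α := {r ∈ P | ∃ p, r.head = Head.choice p}

def normalRules (P : Program α) : Program α := {r ∈ P | ∃ p, r.head = Head.atom p}

def constraintRules (P : Program α) : Program α := {r ∈ P | r.head = Head.bot}

/-! Adding `fixcons Y X` to `P` keeps exactly the stable models `Z` of `P` with `Z ∩ X = Y`, and
adding `fix(Y, X)` to `φ` keeps exactly the models `M` of `φ` with `M ∩ X = Y`. As `X ⊆ 𝒜`, the
projection `M ∩ 𝒜` meets `X` where `M` does, so the correspondence `SM(P) = {M ∩ 𝒜 | M ⊨ φ}` survives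
each quantifier step, and the claim follows by induction on the prefix. -/

variable {α : Type*}

def projModels (φ : CNF α) (A : Set α) : Set (Set α) := {X | ∃ M, CnfModel φ M ∧ X = M ∩ A}

variable {P P' : Program α} {φ ψ : CNF α} {A X Y Z M : Set α}

lemma redModel_union : redModel (P ∪ P') Z M ↔ redModel P Z M ∧ redModel P' Z M :=
  ⟨fun h => ⟨fun r hr => h r (.inl hr), fun r hr => h r (.inr hr)⟩,
    fun h r hr => hr.elim (h.1 r) (h.2 r)⟩

lemma redModel_fixcons_of_inter_eq (h : Z ∩ X = Y) (M : Set α) : redModel (fixcons Y X) Z M := by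
  rintro r (⟨x, hx, rfl⟩ | ⟨x, ⟨hxX, hxY⟩, rfl⟩) hbody
  · exact (hbody (.neg x) rfl).1 (h ▸ hx).1
  · exact hxY (h ▸ ⟨(hbody (.pos x) rfl).1, hxX⟩)

lemma redModel_fixcons_self_iff (hY : Y ⊆ X) : redModel (fixcons Y X) Z Z ↔ Z ∩ X = Y := by
  refine ⟨fun h => Set.Subset.antisymm ?_ ?_, fun h => redModel_fixcons_of_inter_eq h Z⟩
  · rintro x ⟨hxZ, hxX⟩
    by_contra hxY
    exact h _ (.inr ⟨x, ⟨hxX, hxY⟩, rfl⟩) (by rintro l rfl; exact ⟨hxZ, hxZ⟩)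
  · intro x hxY
    refine ⟨?_, hY hxY⟩
    by_contra hxZ
    exact h _ (.inl ⟨x, hxY, rfl⟩) (by rintro l rfl; exact ⟨hxZ, hxZ⟩)

lemma stableModel_union_fixcons_iff (hY : Y ⊆ X) :
    StableModel (P ∪ fixcons Y X) Z ↔ StableModel P Z ∧ Z ∩ X = Y := by
  simp only [StableModel, redModel_union]
  constructor
  · rintro ⟨⟨hP, hfix⟩, hmin⟩
    have hZ := (redModel_fixcons_self_iff hY).1 hfix
    exact ⟨⟨hP, fun M hM hPM => hmin M hM ⟨hPM, redModel_fixcons_of_inter_eq hZ M⟩⟩, hZ⟩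
  · rintro ⟨⟨hP, hmin⟩, hZ⟩
    exact ⟨⟨hP, redModel_fixcons_of_inter_eq hZ Z⟩, fun M hM hPM => hmin M hM hPM.1⟩

lemma sm_union_fixcons (hY : Y ⊆ X) : SM (P ∪ fixcons Y X) = {Z ∈ SM P | Z ∩ X = Y} :=
  Set.ext fun _ => stableModel_union_fixcons_iff hY

lemma cnfModel_union : CnfModel (φ ∪ ψ) M ↔ CnfModel φ M ∧ CnfModel ψ M :=
  ⟨fun h => ⟨fun c hc => h c (.inl hc), fun c hc => h c (.inr hc)⟩,
    fun h c hc => hc.elim (h.1 c) (h.2 c)⟩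

lemma cnfModel_fixbf_iff (hY : Y ⊆ X) : CnfModel (fixbf Y X) M ↔ M ∩ X = Y := by
  refine ⟨fun h => Set.Subset.antisymm ?_ fun x hx => ⟨?_, hY hx⟩, ?_⟩
  · rintro x ⟨hxM, hxX⟩
    by_contra hxY
    obtain ⟨l, rfl, hl⟩ := h _ (.inr ⟨x, ⟨hxX, hxY⟩, rfl⟩)
    exact hl hxM
  · obtain ⟨l, rfl, hl⟩ := h _ (.inl ⟨x, hx, rfl⟩)
    exact hl
  · rintro h c (⟨x, hx, rfl⟩ | ⟨x, ⟨hxX, hxY⟩, rfl⟩)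
    · exact ⟨.pos x, rfl, (h ▸ hx).1⟩
    · exact ⟨.neg x, rfl, fun hxM => hxY (h ▸ ⟨hxM, hxX⟩)⟩

lemma projModels_union_fixbf (hX : X ⊆ A) (hY : Y ⊆ X) :
    projModels (φ ∪ fixbf Y X) A = {Z ∈ projModels φ A | Z ∩ X = Y} := by
  have hproj (M : Set α) : M ∩ A ∩ X = M ∩ X := by rw [Set.inter_assoc, Set.inter_eq_right.2 hX]
  ext Z
  simp only [projModels, cnfModel_union, cnfModel_fixbf_iff hY, Set.mem_ofPred_eq]
  constructor
  · rintro ⟨M, ⟨hM, hMX⟩, rfl⟩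
    exact ⟨⟨M, hM, rfl⟩, (hproj M).trans hMX⟩
  · rintro ⟨⟨M, hM, rfl⟩, hMX⟩
    exact ⟨M, ⟨hM, (hproj M).symm.trans hMX⟩, rfl⟩

lemma satisfiable_iff_cnfSat_of_sm_eq (h : SM P = projModels φ A) : Satisfiable P ↔ CnfSat φ := by
  constructor
  · rintro ⟨Z, hZ⟩
    obtain ⟨M, hM, -⟩ := (h ▸ hZ : Z ∈ projModels φ A)
    exact ⟨M, hM⟩
  · rintro ⟨M, hM⟩
    exact ⟨M ∩ A, (h ▸ ⟨M, hM, rfl⟩ : M ∩ A ∈ SM P)⟩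

end ASP

open ASP in
theorem qlp_sat_iff_qbf_sat_general {α : Type*} (𝒜 : Set α)
    (P : Program α) (φ : CNF α)
    (hSM : SM P = {X | ∃ M, CnfModel φ M ∧ X = M ∩ 𝒜})
    (Qs : List (Quant × Set α))
    (hQ : ∀ q ∈ Qs, q.2 ⊆ 𝒜) :
    QLPSat Qs P ↔ QBFSat Qs φ := by
  induction Qs generalizing P φ with
  | nil => exact satisfiable_iff_cnfSat_of_sm_eq hSM
  | cons q Qs ih =>
    obtain ⟨quant, X⟩ := q
    have hX : X ⊆ 𝒜 := hQ _ List.mem_cons_self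
    have step (Y : Set α) (hY : Y ⊆ X) :
        QLPSat Qs (P ∪ fixcons Y X) ↔ QBFSat Qs (φ ∪ fixbf Y X) := by
      refine ih _ _ ?_ fun q hq => hQ q (List.mem_cons_of_mem _ hq)
      rw [sm_union_fixcons hY, hSM]
      exact (projModels_union_fixbf hX hY).symm
    cases quant
    · exact exists_congr fun Y => and_congr_right (step Y)
    · exact forall₂_congr step

open ASP in
/-- Theorem 1 of the paper: if `SM(P) = {M ∩ 𝒜 | M is a model of φ}`, for `P` a
logic program over `𝒜` and `φ` a CNF formula over `𝒜 ∪ ℬ`, then for every prefix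
`𝒬` whose sets belong to `𝒜`, the QLP `𝒬P` is satisfiable iff the QBF `𝒬φ` is. -/
theorem qlp_sat_iff_qbf_sat {α : Type*} (𝒜 ℬ : Set α) (hAB : Disjoint 𝒜 ℬ)
    (P : Program α) (φ : CNF α)
    (hP : progAtoms P ⊆ 𝒜)
    (hφ : cnfAtoms φ ⊆ 𝒜 ∪ ℬ)
    (hSM : SM P = {X | ∃ M, CnfModel φ M ∧ X = M ∩ 𝒜})
    (Qs : List (Quant × Set α))
    (hQ : ∀ q ∈ Qs, q.2 ⊆ 𝒜)
    (hdisj : Qs.Pairwise fun q q' => Disjoint q.2 q'.2) :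
    QLPSat Qs P ↔ QBFSat Qs φ :=
  qlp_sat_iff_qbf_sat_general 𝒜 P φ hSM Qs hQ
end

section
/- Let 𝒟 be a planning description representing a conformant planning problem 𝒫, let s, s' ⊆ F be states, a an action, and i a positive integer. Let X be a stable model of CP'[0,i−1] such that s' = {f ∈ F | h(f,i−1) ∈ X} and α(i−1) ∉ X. Then τ(s',a) = s if and only if there is a unique stable model Y of X ∪ CP'[i] ∪ fixcons({occ(a,i)}, Occ_i) such that s = {f ∈ F | h(f,i) ∈ Y} and α(i) ∉ Y. Furthermore, if τ(s',a) = ⊥ then X ∪ CP'[i] ∪ fixcons({occ(a,i)}, Occ_i) is unsatisfiable. -/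
namespace ASP

open Classical

variable {F : Type u} {A : Type v}

/-- Atoms used in planning descriptions and their encodings. -/
inductive PAtom (F : Type u) (A : Type v) where
  | flu (f : F)                 -- a fluent `f`
  | fluP (f : F)                -- the primed fluent `f'`
  | act (a : A)                 -- an action atom `a`
  | t (i : ℕ)                   -- `t(i)`
  | action (a : A)              -- `action(a)`
  | h (f : F) (i : ℕ)           -- `h(f,i)`
  | occ (a : A) (i : ℕ)         -- `occ(a,i)`
  | alpha (i : ℕ)               -- `α(i)`
  | obs (i : ℕ)                 -- `obs(true,i)`
  | senses (a : A) (f : F)      -- `senses(a,f)`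
  | assm (f : F) (b : Bool)     -- `assume(f,true/false)`
  | assumable (f : F)           -- `assumable(f)`
  | init (f : F)                -- `init(f)`

def isFlu : PAtom F A → Prop
  | .flu _ => True
  | _ => False

def isDynBody : PAtom F A → Prop
  | .flu _ => True
  | .fluP _ => True
  | .act _ => True
  | _ => False

/-- Dynamic rules: head atoms are fluents, body atoms in `A ∪ F ∪ F'`. -/
def DynRules (DR : Program (PAtom F A)) : Prop :=
  ∀ r ∈ DR, (∀ p, headAtomIs r p → isFlu p) ∧ ∀ l ∈ r.body, isDynBody l.atomOf

/-- Initial rules: all atoms are fluents. -/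
def InitRules (IR : Program (PAtom F A)) : Prop :=
  ∀ r ∈ IR, (∀ p, headAtomIs r p → isFlu p) ∧ ∀ l ∈ r.body, isFlu l.atomOf

/-- Goal rules: integrity constraints whose atoms are fluents. -/
def GoalRules (GR : Program (PAtom F A)) : Prop :=
  ∀ r ∈ GR, r.head = Head.bot ∧ ∀ l ∈ r.body, isFlu l.atomOf

def fluSet (s : Set F) : Set (PAtom F A) := {x | ∃ f ∈ s, x = PAtom.flu f}

def fluPSet (s : Set F) : Set (PAtom F A) := {x | ∃ f ∈ s, x = PAtom.fluP f}

/-- The state `s` represented by the facts `s' = {f' | f ∈ s}`. -/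
def stateProg (s : Set F) : Program (PAtom F A) := factsOf (fluPSet s)

def actProg (a : A) : Program (PAtom F A) := {(⟨Head.atom (PAtom.act a), ∅⟩ : Rule (PAtom F A))}

/-- `DR` is deterministic: `s' ∪ {a} ∪ DR` has at most one stable model. -/
def Deterministic (DR : Program (PAtom F A)) : Prop :=
  ∀ (s : Set F) (a : A), Set.Subsingleton (SM (stateProg s ∪ actProg a ∪ DR))

/-- `DR` is inertial: `SM(s' ∪ DR) = {s' ∪ s}`. -/
def Inertial (DR : Program (PAtom F A)) : Prop :=
  ∀ s : Set F, SM (stateProg s ∪ DR) = {fluPSet s ∪ fluSet s}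

/-- The transition function defined by a (deterministic) set of dynamic rules:
`τ(s,a) = M ∩ F` if `s' ∪ {a} ∪ DR` has a single stable model `M`, `⊥` (`none`) otherwise. -/
noncomputable def tauDR (DR : Program (PAtom F A)) (s : Set F) (a : A) : Option (Set F) :=
  if h : ∃! M, StableModel (stateProg s ∪ actProg a ∪ DR) M then
    some {f | PAtom.flu f ∈ h.choose}
  else none

/-- Extension of a transition function to sets of states (`none` = `⊥`). -/
noncomputable def tauSet (τ : Set F → A → Option (Set F)) (S : Set (Set F)) (a : A) :
    Option (Set (Set F)) :=
  if ∀ s ∈ S, τ s a ≠ none then some {s' | ∃ s ∈ S, τ s a = some s'} else none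

/-- Extension of a transition function to sequential plans. -/
noncomputable def tauList (τ : Set F → A → Option (Set F)) :
    List A → Set (Set F) → Option (Set (Set F))
  | [], S => some S
  | a :: q, S => (tauSet τ S a).bind (tauList τ q)

/-- The states represented by the stable models of `P`. -/
def statesOf (P : Program (PAtom F A)) : Set (Set F) :=
  {s | ∃ M, StableModel P M ∧ s = {f | PAtom.flu f ∈ M}}

def choiceAllFlu (F : Type u) (A : Type v) : Program (PAtom F A) :=
  {r | ∃ f : F, r = ⟨Head.choice (PAtom.flu f), ∅⟩}

/-- The goal states `SM({{f} ← | f ∈ F} ∪ GR)`. -/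
def goalStates (GR : Program (PAtom F A)) : Set (Set F) :=
  statesOf (choiceAllFlu F A ∪ GR)

def renInit : PAtom F A → PAtom F A
  | .flu f => .h f 0
  | x => x

def renDyn (i : ℕ) : PAtom F A → PAtom F A
  | .flu f => .h f i
  | .fluP f => .h f (i - 1)
  | .act a => .occ a i
  | x => x

def renGoal (n : ℕ) : PAtom F A → PAtom F A
  | .flu f => .h f n
  | x => x

def renC1 : PAtom F A → PAtom F A
  | .flu f => .init f
  | x => x

/-- `tt(𝒟_init)`: `IR` with `f` replaced by `h(f,0)`. -/
def ttInit (IR : Program (PAtom F A)) : Program (PAtom F A) := mapProg renInit IR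

/-- `tt(𝒟_dyn)` instantiated at time step `i`. -/
def ttDyn (DR : Program (PAtom F A)) (i : ℕ) : Program (PAtom F A) :=
  addBody {Lit.pos (PAtom.t i)} (mapProg (renDyn i) DR)

/-- `tt(𝒟_goal)`: `GR` with `f` replaced by `h(f,n)`. -/
def ttGoal (GR : Program (PAtom F A)) (n : ℕ) : Program (PAtom F A) := mapProg (renGoal n) GR

/-- `ttt(𝒟_init)`: `⊥` heads replaced by `α(0)`. -/
def tttInit (IR : Program (PAtom F A)) : Program (PAtom F A) :=
  botTo (PAtom.alpha 0) (ttInit IR)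

/-- `ttt(𝒟_dyn)` at step `i`: add `not α(i)` to the bodies. -/
def tttDyn (DR : Program (PAtom F A)) (i : ℕ) : Program (PAtom F A) :=
  addBody {Lit.neg (PAtom.alpha i)} (ttDyn DR i)

/-- `ttt(𝒟_goal)`: add `not α(n)` to the bodies. -/
def tttGoal (GR : Program (PAtom F A)) (n : ℕ) : Program (PAtom F A) :=
  addBody {Lit.neg (PAtom.alpha n)} (ttGoal GR n)

/-- `ttt(𝒟)`, grounded for time steps `1,…,n`. -/
def ttt (DR IR GR : Program (PAtom F A)) (n : ℕ) : Program (PAtom F A) :=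
  tttInit IR ∪ (⋃ i ∈ Set.Icc 1 n, tttDyn DR i) ∪ tttGoal GR n

/-- `Facts = {t(i) | 1 ≤ i ≤ n} ∪ {action(a) | a ∈ A}`. -/
def factsP (F : Type u) (A : Type v) (n : ℕ) : Program (PAtom F A) :=
  {r | (∃ i, 1 ≤ i ∧ i ≤ n ∧ r = ⟨Head.atom (PAtom.t i), ∅⟩) ∨
       (∃ a : A, r = ⟨Head.atom (PAtom.action a), ∅⟩)}

/-- `{occ(A,T) : action(A)} = 1 ← t(T)` instantiated at step `i`, as choice rules
plus at-most-one and at-least-one constraints. -/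
def generateAt (F : Type u) (A : Type v) (i : ℕ) : Program (PAtom F A) :=
  {r | (∃ a : A, r = ⟨Head.choice (PAtom.occ a i), {Lit.pos (PAtom.t i)}⟩) ∨
       (∃ a b : A, a ≠ b ∧ r = ⟨Head.bot, {Lit.pos (PAtom.occ a i), Lit.pos (PAtom.occ b i)}⟩) ∨
       r = ⟨Head.bot, insert (Lit.pos (PAtom.t i)) {l | ∃ a : A, l = Lit.neg (PAtom.occ a i)}⟩}

/-- `{occ(A,T) : action(A)} ≤ 1 ← t(T)` instantiated at step `i`. -/
def generateLeAt (F : Type u) (A : Type v) (i : ℕ) : Program (PAtom F A) :=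
  {r | (∃ a : A, r = ⟨Head.choice (PAtom.occ a i), {Lit.pos (PAtom.t i)}⟩) ∨
       (∃ a b : A, a ≠ b ∧ r = ⟨Head.bot, {Lit.pos (PAtom.occ a i), Lit.pos (PAtom.occ b i)}⟩)}

def generateP (F : Type u) (A : Type v) (n : ℕ) : Program (PAtom F A) :=
  ⋃ i ∈ Set.Icc 1 n, generateAt F A i

def generateLe (F : Type u) (A : Type v) (n : ℕ) : Program (PAtom F A) :=
  ⋃ i ∈ Set.Icc 1 n, generateLeAt F A i

/-- `α(i) ← t(i), α(i−1)`. -/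
def alphaAt (F : Type u) (A : Type v) (i : ℕ) : Program (PAtom F A) :=
  {(⟨Head.atom (PAtom.alpha i), {Lit.pos (PAtom.t i), Lit.pos (PAtom.alpha (i - 1))}⟩ :
     Rule (PAtom F A))}

def alphaProg (F : Type u) (A : Type v) (n : ℕ) : Program (PAtom F A) :=
  ⋃ i ∈ Set.Icc 1 n, alphaAt F A i

/-- `CP = Facts ∪ ttt(𝒟) ∪ Generate ∪ Alpha`. -/
def CP (DR IR GR : Program (PAtom F A)) (n : ℕ) : Program (PAtom F A) :=
  factsP F A n ∪ ttt DR IR GR n ∪ generateP F A n ∪ alphaProg F A n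

/-- `CP'[i] = Alpha(i) ∪ Generate(i) ∪ ttt(𝒟_dyn)(i)`. -/
def CPstep (DR : Program (PAtom F A)) (i : ℕ) : Program (PAtom F A) :=
  alphaAt F A i ∪ generateAt F A i ∪ tttDyn DR i

/-- `CP'[0,j] = Facts ∪ ttt(𝒟_init) ∪ ⋃_{i=1}^{j} CP'[i]` (with `Facts` for horizon `n`). -/
def CPinit (DR IR : Program (PAtom F A)) (n j : ℕ) : Program (PAtom F A) :=
  factsP F A n ∪ tttInit IR ∪ ⋃ i ∈ Set.Icc 1 j, CPstep DR i

/-- `Occ = {occ(a,t) | a ∈ A, 1 ≤ t ≤ n}`. -/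
def OccSet (F : Type u) (A : Type v) (n : ℕ) : Set (PAtom F A) :=
  {x | ∃ a : A, ∃ i, 1 ≤ i ∧ i ≤ n ∧ x = PAtom.occ a i}

/-- `Occ_i = {occ(a,i) | a ∈ A}`. -/
def OccAt (F : Type u) (A : Type v) (i : ℕ) : Set (PAtom F A) :=
  {x | ∃ a : A, x = PAtom.occ a i}

/-- `Open = {h(f,0) | ({h(f,0)} ←) ∈ tt(𝒟_init)}`. -/
def OpenSet (IR : Program (PAtom F A)) : Set (PAtom F A) :=
  {x | ∃ f : F, x = PAtom.h f 0 ∧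
       (⟨Head.choice (PAtom.h f 0), ∅⟩ : Rule (PAtom F A)) ∈ ttInit IR}

/-- `Assume = {assume(f,v) | f ∈ As, v ∈ {true,false}}`. -/
def AssumeSet (F : Type u) (A : Type v) (As : Set F) : Set (PAtom F A) :=
  {x | ∃ f ∈ As, ∃ b : Bool, x = PAtom.assm f b}

/-- `Guess`: the facts `assumable(f)` for `f ∈ As` and the choice rule
`{assume(F,true); assume(F,false)} ≤ 1 ← assumable(F)`. -/
def GuessProg (F : Type u) (A : Type v) (As : Set F) : Program (PAtom F A) :=
  {r | (∃ f ∈ As, r = ⟨Head.atom (PAtom.assumable f), ∅⟩) ∨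
       (∃ f : F, ∃ b : Bool, r = ⟨Head.choice (PAtom.assm f b), {Lit.pos (PAtom.assumable f)}⟩) ∨
       (∃ f : F, r = ⟨Head.bot, {Lit.pos (PAtom.assm f true), Lit.pos (PAtom.assm f false)}⟩)}

/-- `C1`: a copy of the initial rules over `init/1` plus the constraints linking
`init/1` and `assume/2`. -/
def C1Prog (IR : Program (PAtom F A)) : Program (PAtom F A) :=
  mapProg renC1 IR ∪
  {r | ∃ f : F, r = ⟨Head.bot, {Lit.neg (PAtom.init f), Lit.pos (PAtom.assm f true)}⟩} ∪
  {r | ∃ f : F, r = ⟨Head.bot, {Lit.pos (PAtom.init f), Lit.pos (PAtom.assm f false)}⟩}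

/-- `C2`: initial states not agreeing with the assumptions are irrelevant. -/
def C2Prog (F : Type u) (A : Type v) : Program (PAtom F A) :=
  {r | (∃ f : F, r = ⟨Head.atom (PAtom.alpha 0),
          {Lit.neg (PAtom.h f 0), Lit.pos (PAtom.assm f true)}⟩) ∨
       (∃ f : F, r = ⟨Head.atom (PAtom.alpha 0),
          {Lit.pos (PAtom.h f 0), Lit.pos (PAtom.assm f false)}⟩)}

/-- `Facts` for conditional planning, including `senses(a,f)` facts. -/
def factsS (F : Type u) (A : Type v) (sen : A → Option F) (n : ℕ) : Program (PAtom F A) :=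
  factsP F A n ∪ {r | ∃ a f, sen a = some f ∧ r = ⟨Head.atom (PAtom.senses a f), ∅⟩}

/-- `{obs(true,T)} ← t(T), T < n`. -/
def obsProg (F : Type u) (A : Type v) (n : ℕ) : Program (PAtom F A) :=
  {r | ∃ i, 1 ≤ i ∧ i < n ∧ r = ⟨Head.choice (PAtom.obs i), {Lit.pos (PAtom.t i)}⟩}

/-- `α(T) ← t(T), occ(A,T−1), senses(A,F), {h(F,T−1), obs(true,T−1)} = 1`,
with the cardinality constraint expanded into its two cases. -/
def senseProg (F : Type u) (A : Type v) (n : ℕ) : Program (PAtom F A) :=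
  {r | ∃ i, 1 ≤ i ∧ i ≤ n ∧ ∃ a : A, ∃ f : F,
    (r = ⟨Head.atom (PAtom.alpha i),
            {Lit.pos (PAtom.t i), Lit.pos (PAtom.occ a (i - 1)), Lit.pos (PAtom.senses a f),
             Lit.pos (PAtom.h f (i - 1)), Lit.neg (PAtom.obs (i - 1))}⟩ ∨
     r = ⟨Head.atom (PAtom.alpha i),
            {Lit.pos (PAtom.t i), Lit.pos (PAtom.occ a (i - 1)), Lit.pos (PAtom.senses a f),
             Lit.neg (PAtom.h f (i - 1)), Lit.pos (PAtom.obs (i - 1))}⟩)}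

/-- `α(T) ← t(T), occ(A,T), {senses(A,F)} = 0, obs(true,T)`, with the cardinality
constraint expressed by the negative literals `not senses(a,f)`. -/
def nonsenseProg (F : Type u) (A : Type v) (n : ℕ) : Program (PAtom F A) :=
  {r | ∃ i, 1 ≤ i ∧ i ≤ n ∧ ∃ a : A,
    r = ⟨Head.atom (PAtom.alpha i),
          {Lit.pos (PAtom.t i), Lit.pos (PAtom.occ a i), Lit.pos (PAtom.obs i)} ∪
            {l | ∃ f : F, l = Lit.neg (PAtom.senses a f)}⟩}

/-- Conditional plans: the empty plan, `[a;p]` for a non-sensing action, and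
`[aᶠ;(p_f,p_¬f)]` for a sensing action. -/
inductive CPlan (F : Type u) (A : Type v) where
  | nil
  | seq (a : A) (p : CPlan F A)
  | branch (a : A) (pt pf : CPlan F A)

def CPlan.length : CPlan F A → ℕ
  | .nil => 0
  | .seq _ p => p.length + 1
  | .branch _ pt pf => max pt.length pf.length + 1

/-- Well-formed plans: `seq` uses non-sensing actions, `branch` sensing actions
(`sen a = some f` means that `a` is a sensing action observing `f`). -/
def CPlanWF (sen : A → Option F) : CPlan F A → Prop
  | .nil => True
  | .seq a p => sen a = none ∧ CPlanWF sen p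
  | .branch a pt pf => (sen a).isSome ∧ CPlanWF sen pt ∧ CPlanWF sen pf

/-- Extension of a transition function to conditional plans. -/
noncomputable def tauCPlan (τ : Set F → A → Option (Set F)) (sen : A → Option F) :
    CPlan F A → Set (Set F) → Option (Set (Set F))
  | .nil, S => some S
  | .seq a p, S => (tauSet τ S a).bind (tauCPlan τ sen p)
  | .branch a pt pf, S =>
    match sen a with
    | none => none
    | some f =>
      match tauSet τ S a with
      | none => none
      | some S' =>
        match tauCPlan τ sen pt {s ∈ S' | f ∈ s}, tauCPlan τ sen pf {s ∈ S' | f ∉ s} with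
        | some T1, some T2 => some (T1 ∪ T2)
        | _, _ => none

/-- The prefix `∃Occ₁ ∀Obs₁ … ∃Occ_{n−1} ∀Obs_{n−1} ∃Occₙ ∀Open`. -/
def condPrefix (IR : Program (PAtom F A)) (n : ℕ) : List (Quant × Set (PAtom F A)) :=
  (((List.range (n - 1)).map fun k =>
      [(Quant.ex, OccAt F A (k + 1)), (Quant.fa, ({PAtom.obs (k + 1)} : Set (PAtom F A)))]).flatten)
  ++ [(Quant.ex, OccAt F A n), (Quant.fa, OpenSet IR)]

end ASP

namespace OneStepAux
open ASP

variable {F : Type*} {A : Type*}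

/-- The candidate stable models of the step program. -/
def Yof (X : Set (PAtom F A)) (a : A) (i : ℕ) (v : Set F) : Set (PAtom F A) :=
  (X ∪ {PAtom.occ a i}) ∪ {x | ∃ f ∈ v, x = PAtom.h f i}

/-- The candidate stable models of the one-step transition program. -/
def Mof (s' : Set F) (a : A) (v : Set F) : Set (PAtom F A) :=
  (fluPSet s' ∪ {PAtom.act a}) ∪ fluSet v

/-- A stable model only contains head atoms. -/
lemma headClosed {α : Type*} {P : Program α} {Z H : Set α}
    (hZ : StableModel P Z) (hH : ∀ r ∈ P, ∀ p, headAtomIs r p → p ∈ H) : Z ⊆ H := by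
  have hred : redModel P Z (Z ∩ H) := by
    intro r hr hb
    have hb' : ∀ l ∈ r.body, l.redSat Z Z := by
      intro l hl
      have h1 := hb l hl
      cases l with
      | pos b => exact ⟨h1.1, h1.1⟩
      | neg b => exact ⟨h1.1, h1.1⟩
    have hh := hZ.1 r hr hb'
    cases hhead : r.head with
    | atom p =>
      rw [hhead] at hh
      simp only [Head.redSat] at hh ⊢
      exact ⟨hh.1, hh.1, hH r hr p (Or.inl hhead)⟩
    | choice p =>
      simp only [Head.redSat]
      by_cases hp : p ∈ Z
      · exact Or.inl ⟨hp, hp, hH r hr p (Or.inr hhead)⟩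
      · exact Or.inr ⟨hp, fun h => hp h.1⟩
    | bot => rw [hhead] at hh; exact hh
  have heq := hZ.2 _ Set.inter_subset_left hred
  intro x hx
  exact (heq.symm ▸ hx : x ∈ Z ∩ H).2

/-- A fact of a program belongs to each of its stable models (indeed each reduced model
of the full set). -/
lemma factMem {α : Type*} {P : Program α} {Z M : Set α} (hZ : redModel P Z M) {x : α}
    (hx : (⟨Head.atom x, ∅⟩ : Rule α) ∈ P) : x ∈ Z ∧ x ∈ M := by
  have := hZ _ hx (by intro l hl; exact absurd hl (Set.notMem_empty l))
  exact this

lemma isFlu_elim {x : PAtom F A} (h : isFlu x) : ∃ f, x = PAtom.flu f := by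
  cases x <;> simp [isFlu] at h ⊢

end OneStepAux

open ASP OneStepAux in

/-- Lemma 1 of the paper: one-step correspondence between the transition function
`τ_DR` and the stable models of `X ∪ CP'[i] ∪ fixcons({occ(a,i)}, Occᵢ)`. -/
theorem one_step_correspondence {F A : Type*} [Nonempty F] [Nonempty A]
    (DR IR GR : Program (PAtom F A))
    (hDR : DynRules DR) (hIR : InitRules IR) (hGR : GoalRules GR)
    (hdet : Deterministic DR) (hine : Inertial DR)
    (hInonempty : (statesOf IR).Nonempty) (hGnonempty : (goalStates GR).Nonempty)
    (s s' : Set F) (a : A) (i n : ℕ) (hi : 1 ≤ i) (hin : i ≤ n)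
    (X : Set (PAtom F A))
    (hX : StableModel (CPinit DR IR n (i - 1)) X)
    (hs' : s' = {f | PAtom.h f (i - 1) ∈ X})
    (hal : PAtom.alpha (i - 1) ∉ X) :
    ((tauDR DR s' a = some s ↔
        ∃! Y, StableModel (factsOf X ∪ CPstep DR i ∪ fixcons {PAtom.occ a i} (OccAt F A i)) Y ∧
          s = {f | PAtom.h f i ∈ Y} ∧ PAtom.alpha i ∉ Y) ∧
     (tauDR DR s' a = none →
        ¬ Satisfiable (factsOf X ∪ CPstep DR i ∪ fixcons {PAtom.occ a i} (OccAt F A i)))) := by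
  classical
  set Q : Program (PAtom F A) := factsOf X ∪ CPstep DR i ∪ fixcons {PAtom.occ a i} (OccAt F A i)
    with hQdef
  set R : Program (PAtom F A) := stateProg s' ∪ actProg a ∪ DR with hRdef
  have hXH : ∀ x ∈ X, (∀ f, x ≠ PAtom.h f i) ∧ (∀ b : A, x ≠ PAtom.occ b i) ∧
      x ≠ PAtom.alpha i := by
    have hi0 : (0 : ℕ) ≠ i := by omega
    have hsub : X ⊆ {x : PAtom F A | (∀ f, x ≠ PAtom.h f i) ∧ (∀ b : A, x ≠ PAtom.occ b i) ∧
        x ≠ PAtom.alpha i} := by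
      apply headClosed hX
      intro r hr p hp
      rcases hr with (hr | hr) | hr
      · rcases hr with ⟨j, h1, h2, rfl⟩ | ⟨b, rfl⟩
        · rcases hp with hp | hp
          · simp only [Head.atom.injEq] at hp; subst hp; simp
          · exact absurd hp (by simp)
        · rcases hp with hp | hp
          · simp only [Head.atom.injEq] at hp; subst hp; simp
          · exact absurd hp (by simp)
      · obtain ⟨r1, hr1, rfl⟩ := hr
        obtain ⟨r₀, h0, rfl⟩ := hr1
        have hmr : mapRule (renInit (A := A)) r₀ =
            ⟨mapHead renInit r₀.head, mapLit renInit '' r₀.body⟩ := rfl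
        cases hh : r₀.head with
        | atom q =>
          obtain ⟨f, rfl⟩ := isFlu_elim ((hIR r₀ h0).1 q (Or.inl hh))
          rw [hmr, hh] at hp
          simp only [mapHead, renInit, replBotHead] at hp
          rcases hp with hp | hp
          · simp only [Head.atom.injEq] at hp; subst hp; simp [hi0]
          · exact absurd hp (by simp)
        | choice q =>
          obtain ⟨f, rfl⟩ := isFlu_elim ((hIR r₀ h0).1 q (Or.inr hh))
          rw [hmr, hh] at hp
          simp only [mapHead, renInit, replBotHead] at hp
          rcases hp with hp | hp
          · exact absurd hp (by simp)
          · simp only [Head.choice.injEq] at hp; subst hp; simp [hi0]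
        | bot =>
          rw [hmr, hh] at hp
          simp only [mapHead, replBotHead] at hp
          rcases hp with hp | hp
          · simp only [Head.atom.injEq] at hp; subst hp; simp [hi0]
          · exact absurd hp (by simp)
      · simp only [Set.mem_iUnion] at hr
        obtain ⟨j, hj, hr⟩ := hr
        have hj2 : j ≤ i - 1 := (Set.mem_Icc.mp hj).2
        have hji : j ≠ i := by omega
        rcases hr with (hr | hr) | hr
        · rcases hr with rfl
          rcases hp with hp | hp
          · simp only [Head.atom.injEq] at hp; subst hp; simp [hji]
          · exact absurd hp (by simp)
        · rcases hr with ⟨b, rfl⟩ | ⟨b, c, hbc, rfl⟩ | rfl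
          · rcases hp with hp | hp
            · exact absurd hp (by simp)
            · simp only [Head.choice.injEq] at hp; subst hp; simp [hji]
          · rcases hp with hp | hp <;> exact absurd hp (by simp)
          · rcases hp with hp | hp <;> exact absurd hp (by simp)
        · obtain ⟨r', hr', rfl⟩ := hr
          obtain ⟨r'', hr'', rfl⟩ := hr'
          obtain ⟨r₀, h0, rfl⟩ := hr''
          have hflu := (hDR r₀ h0).1
          have hmr : mapRule (renDyn (F := F) (A := A) j) r₀ =
              ⟨mapHead (renDyn j) r₀.head, mapLit (renDyn j) '' r₀.body⟩ := rfl
          cases hh : r₀.head with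
          | atom q =>
            obtain ⟨f, rfl⟩ := isFlu_elim (hflu q (Or.inl hh))
            rw [hmr, hh] at hp
            rcases hp with hp | hp
            · simp only [mapHead, renDyn, Head.atom.injEq] at hp; subst hp; simp [hji]
            · exact absurd hp (by simp [mapHead])
          | choice q =>
            obtain ⟨f, rfl⟩ := isFlu_elim (hflu q (Or.inr hh))
            rw [hmr, hh] at hp
            rcases hp with hp | hp
            · exact absurd hp (by simp [mapHead])
            · simp only [mapHead, renDyn, Head.choice.injEq] at hp; subst hp; simp [hji]
          | bot =>
            rw [hmr, hh] at hp
            rcases hp with hp | hp <;> exact absurd hp (by simp [mapHead])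
    exact fun x hx => hsub hx
  have htX : PAtom.t i ∈ X := by
    have hmem : (⟨Head.atom (PAtom.t i), ∅⟩ : Rule (PAtom F A)) ∈ CPinit DR IR n (i - 1) :=
      Or.inl (Or.inl (Or.inl ⟨i, hi, hin, rfl⟩))
    exact (factMem hX.1 hmem).1
  have hhX : ∀ f, PAtom.h f (i - 1) ∈ X ↔ f ∈ s' := by
    intro f; rw [hs']; exact Iff.rfl
  have hYh : ∀ (v : Set F) (f : F), PAtom.h f i ∈ Yof X a i v ↔ f ∈ v := by
    intro v f
    simp only [Yof, Set.mem_union, Set.mem_singleton_iff, Set.mem_setOf_eq]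
    constructor
    · rintro ((hx | hx) | ⟨f', hf', he⟩)
      · exact absurd rfl ((hXH _ hx).1 f)
      · simp at hx
      · simp only [PAtom.h.injEq] at he
        rw [he.1]; exact hf'
    · intro hf; exact Or.inr ⟨f, hf, rfl⟩
  have hYh' : ∀ (v : Set F) (f : F), PAtom.h f (i - 1) ∈ Yof X a i v ↔ f ∈ s' := by
    intro v f
    simp only [Yof, Set.mem_union, Set.mem_singleton_iff, Set.mem_setOf_eq]
    constructor
    · rintro ((hx | hx) | ⟨f', hf', he⟩)
      · exact (hhX f).1 hx
      · simp at hx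
      · simp only [PAtom.h.injEq] at he
        exact absurd he.2 (by omega)
    · intro hf; exact Or.inl (Or.inl ((hhX f).2 hf))
  have hYocc : ∀ (v : Set F) (b : A), PAtom.occ b i ∈ Yof X a i v ↔ b = a := by
    intro v b
    simp only [Yof, Set.mem_union, Set.mem_singleton_iff, Set.mem_setOf_eq]
    constructor
    · rintro ((hx | hx) | ⟨f', hf', he⟩)
      · exact absurd rfl ((hXH _ hx).2.1 b)
      · simp only [PAtom.occ.injEq] at hx; exact hx.1
      · simp at he
    · intro hb; exact Or.inl (Or.inr (by rw [hb]))
  have hYt : ∀ v : Set F, PAtom.t i ∈ Yof X a i v := fun v => Or.inl (Or.inl htX)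
  have hYai : ∀ v : Set F, PAtom.alpha i ∉ Yof X a i v := by
    intro v h
    rcases h with ((hx | hx) | ⟨f', hf', he⟩)
    · exact (hXH _ hx).2.2 rfl
    · simp at hx
    · simp at he
  have hYai1 : ∀ v : Set F, PAtom.alpha (i - 1) ∉ Yof X a i v := by
    intro v h
    rcases h with ((hx | hx) | ⟨f', hf', he⟩)
    · exact hal hx
    · simp at hx
    · simp at he
  have hXsubY : ∀ v : Set F, X ⊆ Yof X a i v := fun v x hx => Or.inl (Or.inl hx)
  have hMflu : ∀ (v : Set F) (f : F), PAtom.flu f ∈ Mof s' a v ↔ f ∈ v := by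
    intro v f
    simp only [Mof, Set.mem_union, Set.mem_singleton_iff, fluPSet, fluSet, Set.mem_setOf_eq]
    constructor
    · rintro ((⟨f', hf', he⟩ | hx) | ⟨f', hf', he⟩)
      · simp at he
      · simp at hx
      · simp only [PAtom.flu.injEq] at he; rw [he]; exact hf'
    · intro hf; exact Or.inr ⟨f, hf, rfl⟩
  have hMfluP : ∀ (v : Set F) (f : F), PAtom.fluP f ∈ Mof s' a v ↔ f ∈ s' := by
    intro v f
    simp only [Mof, Set.mem_union, Set.mem_singleton_iff, fluPSet, fluSet, Set.mem_setOf_eq]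
    constructor
    · rintro ((⟨f', hf', he⟩ | hx) | ⟨f', hf', he⟩)
      · simp only [PAtom.fluP.injEq] at he; rw [he]; exact hf'
      · simp at hx
      · simp at he
    · intro hf; exact Or.inl (Or.inl ⟨f, hf, rfl⟩)
  have hMact : ∀ (v : Set F) (b : A), PAtom.act b ∈ Mof s' a v ↔ b = a := by
    intro v b
    simp only [Mof, Set.mem_union, Set.mem_singleton_iff, fluPSet, fluSet, Set.mem_setOf_eq]
    constructor
    · rintro ((⟨f', hf', he⟩ | hx) | ⟨f', hf', he⟩)
      · simp at he
      · simp only [PAtom.act.injEq] at hx; exact hx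
      · simp at he
    · intro hb; exact Or.inl (Or.inr (by rw [hb]))
  have hQcases : ∀ r ∈ Q,
      (∃ x ∈ X, r = ⟨Head.atom x, ∅⟩) ∨
      r = ⟨Head.atom (PAtom.alpha i), {Lit.pos (PAtom.t i), Lit.pos (PAtom.alpha (i - 1))}⟩ ∨
      (∃ b : A, r = ⟨Head.choice (PAtom.occ b i), {Lit.pos (PAtom.t i)}⟩) ∨
      (∃ b c : A, b ≠ c ∧ r = ⟨Head.bot, {Lit.pos (PAtom.occ b i), Lit.pos (PAtom.occ c i)}⟩) ∨
      r = ⟨Head.bot, insert (Lit.pos (PAtom.t i)) {l | ∃ b : A, l = Lit.neg (PAtom.occ b i)}⟩ ∨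
      (∃ r₀ ∈ DR, r = ⟨mapHead (renDyn i) r₀.head,
          (mapLit (renDyn i) '' r₀.body ∪ {Lit.pos (PAtom.t i)}) ∪ {Lit.neg (PAtom.alpha i)}⟩) ∨
      r = ⟨Head.bot, {Lit.neg (PAtom.occ a i)}⟩ ∨
      (∃ b : A, b ≠ a ∧ r = ⟨Head.bot, {Lit.pos (PAtom.occ b i)}⟩) := by
    intro r hr
    rw [hQdef] at hr
    rcases hr with ((hr | hr) | hr)
    · exact Or.inl hr
    · rcases hr with ((hr | hr) | hr)
      · exact Or.inr (Or.inl hr)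
      · rcases hr with (⟨b, hb⟩ | ⟨b, c, hbc, h⟩ | h)
        · exact Or.inr (Or.inr (Or.inl ⟨b, hb⟩))
        · exact Or.inr (Or.inr (Or.inr (Or.inl ⟨b, c, hbc, h⟩)))
        · exact Or.inr (Or.inr (Or.inr (Or.inr (Or.inl h))))
      · obtain ⟨r', hr', rfl⟩ := hr
        obtain ⟨r'', hr'', rfl⟩ := hr'
        obtain ⟨r₀, h0, rfl⟩ := hr''
        exact Or.inr (Or.inr (Or.inr (Or.inr (Or.inr (Or.inl ⟨r₀, h0, rfl⟩)))))
    · rcases hr with (⟨x, hx, h⟩ | ⟨x, hx, h⟩)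
      · rw [Set.mem_singleton_iff] at hx
        subst hx
        exact Or.inr (Or.inr (Or.inr (Or.inr (Or.inr (Or.inr (Or.inl h))))))
      · obtain ⟨⟨b, rfl⟩, hne⟩ := hx
        refine Or.inr (Or.inr (Or.inr (Or.inr (Or.inr (Or.inr (Or.inr ⟨b, ?_, h⟩))))))
        intro hba
        exact hne (by rw [hba]; exact rfl)
  have hfactMemQ : ∀ x ∈ X, (⟨Head.atom x, ∅⟩ : Rule (PAtom F A)) ∈ Q := by
    intro x hx
    rw [hQdef]
    exact Or.inl (Or.inl ⟨x, hx, rfl⟩)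
  have hchoiceMemQ : ∀ b : A,
      (⟨Head.choice (PAtom.occ b i), {Lit.pos (PAtom.t i)}⟩ : Rule (PAtom F A)) ∈ Q := by
    intro b
    rw [hQdef]
    exact Or.inl (Or.inr (Or.inl (Or.inr (Or.inl ⟨b, rfl⟩))))
  have hDRmemQ : ∀ r₀ ∈ DR, (⟨mapHead (renDyn i) r₀.head,
      (mapLit (renDyn i) '' r₀.body ∪ {Lit.pos (PAtom.t i)}) ∪ {Lit.neg (PAtom.alpha i)}⟩ :
        Rule (PAtom F A)) ∈ Q := by
    intro r₀ h0
    rw [hQdef]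
    exact Or.inl (Or.inr (Or.inr
      ⟨⟨mapHead (renDyn i) r₀.head, mapLit (renDyn i) '' r₀.body ∪ {Lit.pos (PAtom.t i)}⟩,
        ⟨mapRule (renDyn i) r₀, ⟨r₀, h0, rfl⟩, rfl⟩, rfl⟩))
  have hRcases : ∀ r ∈ R, (∃ f ∈ s', r = ⟨Head.atom (PAtom.fluP f), ∅⟩) ∨
      r = ⟨Head.atom (PAtom.act a), ∅⟩ ∨ r ∈ DR := by
    intro r hr
    rw [hRdef] at hr
    rcases hr with ((hr | hr) | hr)
    · obtain ⟨x, ⟨f, hf, rfl⟩, h⟩ := hr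
      exact Or.inl ⟨f, hf, h⟩
    · exact Or.inr (Or.inl hr)
    · exact Or.inr (Or.inr hr)
  have hstateMemR : ∀ f ∈ s', (⟨Head.atom (PAtom.fluP f), ∅⟩ : Rule (PAtom F A)) ∈ R := by
    intro f hf
    rw [hRdef]
    exact Or.inl (Or.inl ⟨PAtom.fluP f, ⟨f, hf, rfl⟩, rfl⟩)
  have hactMemR : (⟨Head.atom (PAtom.act a), ∅⟩ : Rule (PAtom F A)) ∈ R := by
    rw [hRdef]
    exact Or.inl (Or.inr rfl)
  have hLit : ∀ (u v : Set F) (l : Lit (PAtom F A)), isDynBody l.atomOf →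
      ((mapLit (renDyn i) l).redSat (Yof X a i u) (Yof X a i v) ↔
        l.redSat (Mof s' a u) (Mof s' a v)) := by
    have hdynElim : ∀ x : PAtom F A, isDynBody x →
        (∃ f, x = PAtom.flu f) ∨ (∃ f, x = PAtom.fluP f) ∨ (∃ b, x = PAtom.act b) := by
      intro x hx; cases x <;> simp [isDynBody] at hx ⊢
    intro u v l hl
    cases l with
    | pos p =>
      rcases hdynElim p hl with ⟨f, rfl⟩ | ⟨f, rfl⟩ | ⟨b, rfl⟩ <;>
        simp [mapLit, renDyn, Lit.redSat, Lit.sat, hYh, hYh', hYocc, hMflu, hMfluP, hMact]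
    | neg p =>
      rcases hdynElim p hl with ⟨f, rfl⟩ | ⟨f, rfl⟩ | ⟨b, rfl⟩ <;>
        simp [mapLit, renDyn, Lit.redSat, Lit.sat, hYh, hYh', hYocc, hMflu, hMfluP, hMact]
  have hHead : ∀ (u v : Set F) (H : Head (PAtom F A)),
      (∀ p, (H = Head.atom p ∨ H = Head.choice p) → isFlu p) →
      ((mapHead (renDyn i) H).redSat (Yof X a i u) (Yof X a i v) ↔
        H.redSat (Mof s' a u) (Mof s' a v)) := by
    intro u v H hH
    cases H with
    | atom p =>
      obtain ⟨f, rfl⟩ := isFlu_elim (hH p (Or.inl rfl))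
      simp [mapHead, renDyn, Head.redSat, hYh, hMflu]
    | choice p =>
      obtain ⟨f, rfl⟩ := isFlu_elim (hH p (Or.inr rfl))
      simp [mapHead, renDyn, Head.redSat, hYh, hMflu]
    | bot => simp [mapHead, Head.redSat]
  have hA : ∀ u v : Set F,
      redModel Q (Yof X a i u) (Yof X a i v) ↔ redModel R (Mof s' a u) (Mof s' a v) := by
    intro u v
    constructor
    · intro hQm r hr hbody
      rcases hRcases r hr with ⟨f, hf, rfl⟩ | rfl | hrDR
      · exact ⟨(hMfluP u f).mpr hf, (hMfluP v f).mpr hf⟩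
      · exact ⟨(hMact u a).mpr rfl, (hMact v a).mpr rfl⟩
      · have hb' : ∀ l ∈ (⟨mapHead (renDyn i) r.head,
            (mapLit (renDyn i) '' r.body ∪ {Lit.pos (PAtom.t i)}) ∪ {Lit.neg (PAtom.alpha i)}⟩ :
              Rule (PAtom F A)).body, l.redSat (Yof X a i u) (Yof X a i v) := by
          intro l hl
          rcases hl with (⟨l₀, hl₀, rfl⟩ | hl) | hl
          · exact (hLit u v l₀ ((hDR r hrDR).2 l₀ hl₀)).mpr (hbody l₀ hl₀)
          · rw [Set.mem_singleton_iff] at hl; subst hl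
            exact ⟨hYt u, hYt v⟩
          · rw [Set.mem_singleton_iff] at hl; subst hl
            exact ⟨hYai u, hYai v⟩
        have hconc := hQm _ (hDRmemQ r hrDR) hb'
        exact (hHead u v r.head (fun p hp => (hDR r hrDR).1 p hp)).mp hconc
    · intro hRm r hr hbody
      rcases hQcases r hr with ⟨x, hx, rfl⟩ | rfl | ⟨b, rfl⟩ | ⟨b, c, hbc, rfl⟩ | rfl |
        ⟨r₀, h0, rfl⟩ | rfl | ⟨b, hba, rfl⟩
      · exact ⟨hXsubY u hx, hXsubY v hx⟩
      · have := hbody (Lit.pos (PAtom.alpha (i - 1))) (Or.inr rfl)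
        exact absurd this.1 (hYai1 u)
      · by_cases hb : b = a
        · subst hb; exact Or.inl ⟨(hYocc u b).mpr rfl, (hYocc v b).mpr rfl⟩
        · exact Or.inr ⟨fun h => hb ((hYocc u b).mp h), fun h => hb ((hYocc v b).mp h)⟩
      · have h1 := hbody (Lit.pos (PAtom.occ b i)) (Set.mem_insert _ _)
        have h2 := hbody (Lit.pos (PAtom.occ c i)) (Or.inr rfl)
        exact hbc (((hYocc u b).mp h1.1).trans ((hYocc u c).mp h2.1).symm)
      · have := hbody (Lit.neg (PAtom.occ a i)) (Or.inr ⟨a, rfl⟩)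
        exact this.1 ((hYocc u a).mpr rfl)
      · have hb0 : ∀ l ∈ r₀.body, l.redSat (Mof s' a u) (Mof s' a v) := by
          intro l hl
          exact (hLit u v l ((hDR r₀ h0).2 l hl)).mp
            (hbody (mapLit (renDyn i) l) (Or.inl (Or.inl ⟨l, hl, rfl⟩)))
        have hconc := hRm r₀ (by rw [hRdef]; exact Or.inr h0) hb0
        exact (hHead u v r₀.head (fun p hp => (hDR r₀ h0).1 p hp)).mpr hconc
      · have := hbody (Lit.neg (PAtom.occ a i)) rfl
        exact this.1 ((hYocc u a).mpr rfl)
      · have := hbody (Lit.pos (PAtom.occ b i)) rfl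
        exact hba ((hYocc u b).mp this.1)
  have hQbase : ∀ (u : Set F) (M' : Set (PAtom F A)), M' ⊆ Yof X a i u →
      redModel Q (Yof X a i u) M' → X ⊆ M' ∧ PAtom.occ a i ∈ M' := by
    intro u M' hsub hm
    have hXM : X ⊆ M' := fun x hx => (factMem hm (hfactMemQ x hx)).2
    refine ⟨hXM, ?_⟩
    have hch := hm _ (hchoiceMemQ a) (by
      intro l hl; rw [Set.mem_singleton_iff] at hl; subst hl
      exact ⟨hYt u, hXM htX⟩)
    rcases hch with h1 | h1
    · exact h1.2
    · exact absurd ((hYocc u a).mpr rfl) h1.1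
  have hRbase : ∀ (u : Set F) (M₀ : Set (PAtom F A)), M₀ ⊆ Mof s' a u →
      redModel R (Mof s' a u) M₀ → (∀ f ∈ s', PAtom.fluP f ∈ M₀) ∧ PAtom.act a ∈ M₀ := by
    intro u M₀ hsub hm
    exact ⟨fun f hf => (factMem hm (hstateMemR f hf)).2, (factMem hm hactMemR).2⟩
  have hBfwd : ∀ u : Set F, StableModel R (Mof s' a u) → StableModel Q (Yof X a i u) := by
    intro u hM
    constructor
    · exact (hA u u).mpr hM.1
    · intro M' hsub hred
      obtain ⟨hXM, hoccM⟩ := hQbase u M' hsub hred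
      have hveq : M' = Yof X a i {f | PAtom.h f i ∈ M'} := by
        apply Set.ext; intro x
        constructor
        · intro hx
          have hx2 : x ∈ (X ∪ {PAtom.occ a i}) ∪ {x | ∃ f ∈ u, x = PAtom.h f i} := hsub hx
          rcases hx2 with (hx' | hx') | ⟨f, hf, rfl⟩
          · exact Or.inl (Or.inl hx')
          · exact Or.inl (Or.inr hx')
          · exact Or.inr ⟨f, hx, rfl⟩
        · rintro ((hx' | hx') | ⟨f, hf, rfl⟩)
          · exact hXM hx'
          · rw [Set.mem_singleton_iff] at hx'; subst hx'; exact hoccM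
          · exact hf
      have hvu : {f | PAtom.h f i ∈ M'} ⊆ u := fun f hf => (hYh u f).mp (hsub hf)
      have hredv : redModel Q (Yof X a i u) (Yof X a i {f | PAtom.h f i ∈ M'}) := by
        rw [← hveq]; exact hred
      have hRred := (hA u {f | PAtom.h f i ∈ M'}).mp hredv
      have hMv : Mof s' a {f | PAtom.h f i ∈ M'} ⊆ Mof s' a u := by
        intro x hx
        have hx2 : x ∈ (fluPSet s' ∪ {PAtom.act a}) ∪ fluSet {f | PAtom.h f i ∈ M'} := hx
        rcases hx2 with h1 | ⟨f, hf, rfl⟩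
        · exact Or.inl h1
        · exact Or.inr ⟨f, hvu hf, rfl⟩
      have hMeq := hM.2 _ hMv hRred
      have hvequ : {f | PAtom.h f i ∈ M'} = u := by
        apply Set.ext; intro f
        rw [← hMflu {f | PAtom.h f i ∈ M'} f, ← hMflu u f, hMeq]
      rw [hveq, hvequ]
  have hBbwd : ∀ u : Set F, StableModel Q (Yof X a i u) → StableModel R (Mof s' a u) := by
    intro u hY
    constructor
    · exact (hA u u).mp hY.1
    · intro M₀ hsub hred
      obtain ⟨hPM, hactM⟩ := hRbase u M₀ hsub hred
      have hveq : M₀ = Mof s' a {f | PAtom.flu f ∈ M₀} := by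
        apply Set.ext; intro x
        constructor
        · intro hx
          have hx2 : x ∈ (fluPSet s' ∪ {PAtom.act a}) ∪ fluSet u := hsub hx
          rcases hx2 with (⟨f, hf, rfl⟩ | hx') | ⟨f, hf, rfl⟩
          · exact Or.inl (Or.inl ⟨f, hf, rfl⟩)
          · exact Or.inl (Or.inr hx')
          · exact Or.inr ⟨f, hx, rfl⟩
        · rintro ((⟨f, hf, rfl⟩ | hx') | ⟨f, hf, rfl⟩)
          · exact hPM f hf
          · rw [Set.mem_singleton_iff] at hx'; subst hx'; exact hactM
          · exact hf
      have hvu : {f | PAtom.flu f ∈ M₀} ⊆ u := fun f hf => (hMflu u f).mp (hsub hf)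
      have hredv : redModel R (Mof s' a u) (Mof s' a {f | PAtom.flu f ∈ M₀}) := by
        rw [← hveq]; exact hred
      have hQred := (hA u {f | PAtom.flu f ∈ M₀}).mpr hredv
      have hYv : Yof X a i {f | PAtom.flu f ∈ M₀} ⊆ Yof X a i u := by
        intro x hx
        have hx2 : x ∈ (X ∪ {PAtom.occ a i}) ∪ {x | ∃ f ∈ {f | PAtom.flu f ∈ M₀}, x = PAtom.h f i} := hx
        rcases hx2 with h1 | ⟨f, hf, rfl⟩
        · exact Or.inl h1
        · exact Or.inr ⟨f, hvu hf, rfl⟩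
      have hYeq := hY.2 _ hYv hQred
      have hvequ : {f | PAtom.flu f ∈ M₀} = u := by
        apply Set.ext; intro f
        rw [← hYh {f | PAtom.flu f ∈ M₀} f, ← hYh u f, hYeq]
      rw [hveq, hvequ]
  have hQshape : ∀ Y, StableModel Q Y → Y = Yof X a i {f | PAtom.h f i ∈ Y} := by
    intro Y hY
    have hYH : Y ⊆ {x | x ∈ X ∨ (∃ b : A, x = PAtom.occ b i) ∨ (∃ f, x = PAtom.h f i) ∨
        x = PAtom.alpha i} := by
      apply headClosed hY
      intro r hr p hp
      rcases hQcases r hr with ⟨x, hx, rfl⟩ | rfl | ⟨b, rfl⟩ | ⟨b, c, hbc, rfl⟩ | rfl |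
        ⟨r₀, h0, rfl⟩ | rfl | ⟨b, hba, rfl⟩
      · rcases hp with hp | hp
        · simp only [Head.atom.injEq] at hp; exact Or.inl (hp ▸ hx)
        · exact absurd hp (by simp)
      · rcases hp with hp | hp
        · simp only [Head.atom.injEq] at hp; exact Or.inr (Or.inr (Or.inr hp.symm))
        · exact absurd hp (by simp)
      · rcases hp with hp | hp
        · exact absurd hp (by simp)
        · simp only [Head.choice.injEq] at hp; exact Or.inr (Or.inl ⟨b, hp.symm⟩)
      · rcases hp with hp | hp <;> exact absurd hp (by simp)
      · rcases hp with hp | hp <;> exact absurd hp (by simp)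
      · have hflu := (hDR r₀ h0).1
        cases hh : r₀.head with
        | atom q =>
          obtain ⟨f, rfl⟩ := isFlu_elim (hflu q (Or.inl hh))
          rcases hp with hp | hp
          · rw [show (⟨mapHead (renDyn i) r₀.head,
              (mapLit (renDyn i) '' r₀.body ∪ {Lit.pos (PAtom.t i)}) ∪
                {Lit.neg (PAtom.alpha i)}⟩ : Rule (PAtom F A)).head = mapHead (renDyn i) r₀.head
              from rfl, hh] at hp
            simp only [mapHead, renDyn, Head.atom.injEq] at hp
            exact Or.inr (Or.inr (Or.inl ⟨f, hp.symm⟩))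
          · rw [show (⟨mapHead (renDyn i) r₀.head,
              (mapLit (renDyn i) '' r₀.body ∪ {Lit.pos (PAtom.t i)}) ∪
                {Lit.neg (PAtom.alpha i)}⟩ : Rule (PAtom F A)).head = mapHead (renDyn i) r₀.head
              from rfl, hh] at hp
            simp [mapHead] at hp
        | choice q =>
          obtain ⟨f, rfl⟩ := isFlu_elim (hflu q (Or.inr hh))
          rcases hp with hp | hp
          · rw [show (⟨mapHead (renDyn i) r₀.head,
              (mapLit (renDyn i) '' r₀.body ∪ {Lit.pos (PAtom.t i)}) ∪
                {Lit.neg (PAtom.alpha i)}⟩ : Rule (PAtom F A)).head = mapHead (renDyn i) r₀.head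
              from rfl, hh] at hp
            simp [mapHead] at hp
          · rw [show (⟨mapHead (renDyn i) r₀.head,
              (mapLit (renDyn i) '' r₀.body ∪ {Lit.pos (PAtom.t i)}) ∪
                {Lit.neg (PAtom.alpha i)}⟩ : Rule (PAtom F A)).head = mapHead (renDyn i) r₀.head
              from rfl, hh] at hp
            simp only [mapHead, renDyn, Head.choice.injEq] at hp
            exact Or.inr (Or.inr (Or.inl ⟨f, hp.symm⟩))
        | bot =>
          rcases hp with hp | hp <;>
          · rw [show (⟨mapHead (renDyn i) r₀.head,
              (mapLit (renDyn i) '' r₀.body ∪ {Lit.pos (PAtom.t i)}) ∪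
                {Lit.neg (PAtom.alpha i)}⟩ : Rule (PAtom F A)).head = mapHead (renDyn i) r₀.head
              from rfl, hh] at hp
            simp [mapHead] at hp
      · rcases hp with hp | hp <;> exact absurd hp (by simp)
      · rcases hp with hp | hp <;> exact absurd hp (by simp)
    have hXY : X ⊆ Y := fun x hx => (factMem hY.1 (hfactMemQ x hx)).2
    have hoccY : PAtom.occ a i ∈ Y := by
      by_contra hno
      have hc : (⟨Head.bot, {Lit.neg (PAtom.occ a i)}⟩ : Rule (PAtom F A)) ∈ Q := by
        rw [hQdef]; exact Or.inr (Or.inl ⟨PAtom.occ a i, rfl, rfl⟩)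
      exact hY.1 _ hc (by
        intro l hl; rw [Set.mem_singleton_iff] at hl; subst hl; exact ⟨hno, hno⟩)
    have hoccY' : ∀ b : A, PAtom.occ b i ∈ Y → b = a := by
      intro b hb
      by_contra hba
      have hc : (⟨Head.bot, {Lit.pos (PAtom.occ b i)}⟩ : Rule (PAtom F A)) ∈ Q := by
        rw [hQdef]
        exact Or.inr (Or.inr ⟨PAtom.occ b i, ⟨⟨b, rfl⟩, by simp [hba]⟩, rfl⟩)
      exact hY.1 _ hc (fun l hl => by
        rw [Set.mem_singleton_iff] at hl; subst hl; exact ⟨hb, hb⟩)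
    have haiY : PAtom.alpha i ∉ Y := by
      by_contra hai
      have hai1 : PAtom.alpha (i - 1) ∉ Y := by
        intro h
        rcases hYH h with h1 | ⟨b, h1⟩ | ⟨f, h1⟩ | h1
        · exact hal h1
        · simp at h1
        · simp at h1
        · simp only [PAtom.alpha.injEq] at h1; omega
      have hred : redModel Q Y (Y \ {PAtom.alpha i}) := by
        intro r hr hbody
        rcases hQcases r hr with ⟨x, hx, rfl⟩ | rfl | ⟨b, rfl⟩ | ⟨b, c, hbc, rfl⟩ | rfl |
          ⟨r₀, h0, rfl⟩ | rfl | ⟨b, hba, rfl⟩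
        · exact ⟨hXY hx, hXY hx, fun he => (hXH x hx).2.2 he⟩
        · have := hbody (Lit.pos (PAtom.alpha (i - 1))) (Or.inr rfl)
          exact absurd this.1 hai1
        · by_cases hbY : PAtom.occ b i ∈ Y
          · exact Or.inl ⟨hbY, hbY, by simp⟩
          · exact Or.inr ⟨hbY, fun h => hbY h.1⟩
        · have h1 := hbody (Lit.pos (PAtom.occ b i)) (Set.mem_insert _ _)
          have h2 := hbody (Lit.pos (PAtom.occ c i)) (Or.inr rfl)
          exact hbc ((hoccY' b h1.1).trans (hoccY' c h2.1).symm)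
        · have := hbody (Lit.neg (PAtom.occ a i)) (Or.inr ⟨a, rfl⟩)
          exact this.1 hoccY
        · have := hbody (Lit.neg (PAtom.alpha i)) (Or.inr rfl)
          exact absurd hai this.1
        · have := hbody (Lit.neg (PAtom.occ a i)) rfl
          exact this.1 hoccY
        · have := hbody (Lit.pos (PAtom.occ b i)) rfl
          exact hba (hoccY' b this.1)
      have heq := hY.2 _ Set.diff_subset hred
      rw [← heq] at hai
      exact hai.2 rfl
    apply Set.ext; intro x
    constructor
    · intro hx
      rcases hYH hx with h1 | ⟨b, rfl⟩ | ⟨f, rfl⟩ | rfl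
      · exact Or.inl (Or.inl h1)
      · refine Or.inl (Or.inr ?_)
        rw [hoccY' b hx]; exact rfl
      · exact Or.inr ⟨f, hx, rfl⟩
      · exact absurd hx haiY
    · rintro ((h1 | h1) | ⟨f, hf, rfl⟩)
      · exact hXY h1
      · rw [Set.mem_singleton_iff] at h1; subst h1; exact hoccY
      · exact hf
  have hRshape : ∀ M, StableModel R M → M = Mof s' a {f | PAtom.flu f ∈ M} := by
    intro M hM
    have hMH : M ⊆ {x | (∃ f ∈ s', x = PAtom.fluP f) ∨ x = PAtom.act a ∨
        ∃ f, x = PAtom.flu f} := by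
      apply headClosed hM
      intro r hr p hp
      rcases hRcases r hr with ⟨f, hf, rfl⟩ | rfl | hrDR
      · rcases hp with hp | hp
        · simp only [Head.atom.injEq] at hp; exact Or.inl ⟨f, hf, hp.symm⟩
        · exact absurd hp (by simp)
      · rcases hp with hp | hp
        · simp only [Head.atom.injEq] at hp; exact Or.inr (Or.inl hp.symm)
        · exact absurd hp (by simp)
      · obtain ⟨f, hf⟩ := isFlu_elim ((hDR r hrDR).1 p hp)
        exact Or.inr (Or.inr ⟨f, hf⟩)
    have hbase1 : ∀ f ∈ s', PAtom.fluP f ∈ M := fun f hf => (factMem hM.1 (hstateMemR f hf)).2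
    have hbase2 : PAtom.act a ∈ M := (factMem hM.1 hactMemR).2
    apply Set.ext; intro x
    constructor
    · intro hx
      rcases hMH hx with ⟨f, hf, rfl⟩ | rfl | ⟨f, rfl⟩
      · exact Or.inl (Or.inl ⟨f, hf, rfl⟩)
      · exact Or.inl (Or.inr rfl)
      · exact Or.inr ⟨f, hx, rfl⟩
    · rintro ((⟨f, hf, rfl⟩ | h1) | ⟨f, hf, rfl⟩)
      · exact hbase1 f hf
      · rw [Set.mem_singleton_iff] at h1; subst h1; exact hbase2
      · exact hf
  have hYuEq : ∀ u : Set F, {f | PAtom.h f i ∈ Yof X a i u} = u := fun u => Set.ext (hYh u)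
  have hMuEq : ∀ u : Set F, {f | PAtom.flu f ∈ Mof s' a u} = u := fun u => Set.ext (hMflu u)
  by_cases hex : ∃! M, StableModel (stateProg s' ∪ actProg a ∪ DR) M
  · have hτpos : tauDR DR s' a = some {f | PAtom.flu f ∈ hex.choose} := by
      unfold tauDR; exact dif_pos hex
    have hMch : StableModel R hex.choose := hex.choose_spec.1
    have huniq : ∀ M', StableModel R M' → M' = hex.choose := hex.choose_spec.2
    constructor
    · rw [hτpos]
      constructor
      · intro h
        have hs : {f | PAtom.flu f ∈ hex.choose} = s := Option.some.inj h
        have hM : StableModel R (Mof s' a s) := by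
          have h2 := hRshape _ hMch
          rw [hs] at h2
          rw [← h2]; exact hMch
        refine ⟨Yof X a i s, ⟨hBfwd s hM, (hYuEq s).symm, hYai s⟩, ?_⟩
        rintro Y' ⟨hY', hsY', -⟩
        have hsh := hQshape Y' hY'
        rw [← hsY'] at hsh
        exact hsh
      · rintro ⟨Y, ⟨hYst, hsY, -⟩, -⟩
        have hsh := hQshape Y hYst
        rw [← hsY] at hsh
        have hYst' : StableModel Q (Yof X a i s) := by rw [← hsh]; exact hYst
        have hMst : StableModel R (Mof s' a s) := hBbwd s hYst'
        have h3 := huniq _ hMst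
        rw [← h3, hMuEq]
    · rw [hτpos]; intro h; exact absurd h (by simp)
  · have hτneg : tauDR DR s' a = none := by unfold tauDR; exact dif_neg hex
    rw [hτneg]
    have hnosat : ¬ Satisfiable Q := by
      rintro ⟨Y, hYst⟩
      have hsh := hQshape Y hYst
      have hYst' : StableModel Q (Yof X a i {f | PAtom.h f i ∈ Y}) := by
        rw [← hsh]; exact hYst
      have hMst := hBbwd _ hYst'
      exact hex ⟨_, hMst, fun y hy => hdet s' a hy hMst⟩
    constructor
    · constructor
      · intro h; exact absurd h (by simp)
      · rintro ⟨Y, ⟨hYst, -, -⟩, -⟩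
        exact absurd ⟨Y, hYst⟩ hnosat
    · intro _; exact hnosat
end

section
/- Let 𝒟 be a planning description representing a conformant planning problem 𝒫, let s, s' ⊆ F be states, p = [a₁; a₂; …; aₙ] a plan, i a positive integer, and X a stable model of CP'[0,i−1] such that s' = {f ∈ F | h(f,i−1) ∈ X} and α(i−1) ∉ X. Then τ({s'},p) = s if and only if there is a unique stable model Y of X ∪ ⋃_{j=i}^{i+n−1} (CP'[j] ∪ fixcons({occ(a_{j−i+1},j)}, Occ_j)) such that s = {f ∈ F | h(f,i+n−1) ∈ Y}; furthermore, for such Y it holds that α(i+n−1) ∉ Y. -/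
namespace ASP

variable {F : Type u} {A : Type v}

/-- The program `X ∪ ⋃_{j=i}^{i+n−1} (CP'[j] ∪ fixcons({occ(a_{j−i+1},j)}, Occ_j))`
for a plan `p = [a₁;…;aₙ]`. -/
def multiStepProg (DR : Program (PAtom F A)) (X : Set (PAtom F A)) (p : List A) (i : ℕ) :
    Program (PAtom F A) :=
  factsOf X ∪ ⋃ k : Fin p.length,
    (CPstep DR (i + k.1) ∪ fixcons {PAtom.occ (p.get k) (i + k.1)} (OccAt F A (i + k.1)))

end ASP

/-!
The program for `p ++ [a]` is the program for `p` together with the rules of step `j = i + |p|`,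
whose heads are the atoms `α(j)`, `occ(·,j)`, `h(·,j)` of time `j`, while all atoms of the older
rules have smaller times. Splitting three times (at `α(j)`, at the `occ(·,j)`, at the `h(·,j)`)
shows that the stable models of the new program are the extensions of a stable model `Y` of the
old one in which `α(j)` is false (its body needs `α(j−1) ∉ Y`), `occ(a,j)` is the only action atom
(forced by `fixcons`), and the atoms `h(·,j)` form, under the renaming `h(f,j) ↦ f`,
`h(f,j−1) ↦ f'`, `occ(b,j) ↦ b`, a stable model of `s' ∪ {a} ∪ DR` for the state `s` that `Y`
holds at time `j − 1`. Determinism of `DR` makes this extension unique; induction on the plan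
finishes the proof.
-/

namespace ASP

section General

variable {α β : Type*}

lemma Lit.sat_mapLit {g : α → β} {Z : Set β} {M : Set α} {l : Lit α}
    (h : g l.atomOf ∈ Z ↔ l.atomOf ∈ M) : (mapLit g l).sat Z ↔ l.sat M := by
  cases l with
  | pos a => exact h
  | neg a => exact not_congr h

lemma Head.redSat_mapHead {g : α → β} {Z W : Set β} {X M : Set α} {H : Head α}
    (h : ∀ x ∈ H.atoms, (g x ∈ Z ↔ x ∈ X) ∧ (g x ∈ W ↔ x ∈ M)) :
    (mapHead g H).redSat Z W ↔ H.redSat X M := by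
  cases H with
  | atom a => simp only [mapHead, Head.redSat, (h a rfl).1, (h a rfl).2]
  | choice a => simp only [mapHead, Head.redSat, (h a rfl).1, (h a rfl).2]
  | bot => rfl

lemma mapHead_id : mapHead (id : α → α) = id := funext fun H => by cases H <;> rfl

lemma Head.redSat_congr {X₁ M₁ X₂ M₂ : Set α} {H : Head α}
    (h : ∀ x ∈ H.atoms, (x ∈ X₁ ↔ x ∈ X₂) ∧ (x ∈ M₁ ↔ x ∈ M₂)) :
    H.redSat X₁ M₁ ↔ H.redSat X₂ M₂ := by
  simpa only [mapHead_id, id_eq] using Head.redSat_mapHead (g := id) h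

lemma redModel_mapProg_iff {g : α → β} {P : Program α} {Z W : Set β} {X M : Set α}
    (h : ∀ r ∈ P, ∀ x ∈ ruleAtoms r, (g x ∈ Z ↔ x ∈ X) ∧ (g x ∈ W ↔ x ∈ M)) :
    redModel (mapProg g P) Z W ↔ redModel P X M := by
  have hbody : ∀ r ∈ P, (∀ l ∈ (mapRule g r).body, l.redSat Z W) ↔ ∀ l ∈ r.body, l.redSat X M :=
    fun r hr => by
      refine Set.forall_mem_image.trans (forall₂_congr fun l hl => and_congr ?_ ?_) <;>
        refine Lit.sat_mapLit ?_
      exacts [(h r hr _ (Or.inr ⟨l, hl, rfl⟩)).1, (h r hr _ (Or.inr ⟨l, hl, rfl⟩)).2]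
  have hhead : ∀ r ∈ P, (mapRule g r).head.redSat Z W ↔ r.head.redSat X M :=
    fun r hr => Head.redSat_mapHead fun x hx => h r hr x (Or.inl hx)
  simp only [redModel, mapProg, Set.forall_mem_image]
  exact forall₂_congr fun r hr => imp_congr (hbody r hr) (hhead r hr)

lemma mapProg_id (P : Program α) : mapProg id P = P := by
  have hlit : mapLit (id : α → α) = id := funext fun l => by cases l <;> rfl
  have hrule : mapRule (id : α → α) = id := funext fun r => by simp [mapRule, hlit, mapHead_id]
  simp [mapProg, hrule]

lemma redModel_congr {P : Program α} {X₁ M₁ X₂ M₂ : Set α}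
    (h : ∀ r ∈ P, ∀ x ∈ ruleAtoms r, (x ∈ X₁ ↔ x ∈ X₂) ∧ (x ∈ M₁ ↔ x ∈ M₂)) :
    redModel P X₁ M₁ ↔ redModel P X₂ M₂ := by
  simpa only [mapProg_id] using redModel_mapProg_iff (g := id) h

lemma redModel_addBody_iff {L : Set (Lit α)} {P : Program α} {Z W : Set α}
    (hL : ∀ l ∈ L, l.redSat Z W) : redModel (addBody L P) Z W ↔ redModel P Z W := by
  simp only [redModel, addBody, Set.mem_ofPred_eq, forall_exists_index, and_imp]
  constructor
  · rintro h r hr hb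
    exact h ⟨r.head, r.body ∪ L⟩ r hr rfl fun l hl => hl.elim (hb l) (hL l)
  · rintro h _ r hr rfl hb
    exact h r hr fun l hl => hb l (Or.inl hl)

lemma mem_of_stableModel_of_fact {P : Program α} {Z : Set α} {x : α} (hZ : StableModel P Z)
    (hx : ⟨Head.atom x, ∅⟩ ∈ P) : x ∈ Z :=
  (hZ.1 _ hx fun _ hl => hl.elim).1

lemma exists_head_of_mem_stableModel {P : Program α} {Z : Set α} (hZ : StableModel P Z) {x : α}
    (hx : x ∈ Z) : ∃ r ∈ P, x ∈ r.head.atoms := by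
  set W := {y ∈ Z | ∃ r ∈ P, y ∈ r.head.atoms}
  have hW : redModel P Z W := fun r hr hb => by
    have hZZ := hZ.1 r hr fun l hl => ⟨(hb l hl).1, (hb l hl).1⟩
    refine (Head.redSat_congr fun y hy => ⟨Iff.rfl, ?_⟩).1 hZZ
    exact ⟨fun hyZ => ⟨hyZ, r, hr, hy⟩, And.left⟩
  rw [← hZ.2 W (Set.sep_subset _ _) hW] at hx
  exact hx.2

lemma ruleAtoms_fixcons {X Y : Set α} {r : Rule α} (hr : r ∈ fixcons X Y) :
    ruleAtoms r ⊆ X ∪ Y := by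
  rcases hr with ⟨x, hx, rfl⟩ | ⟨x, ⟨hx, -⟩, rfl⟩ <;> simp [ruleAtoms, Head.atoms, Lit.atomOf, hx]

/-- The top half of a splitting: `Z` is a stable model of `R` once the atoms `Y` are given. -/
def StableAbove (R : Program α) (Y Z : Set α) : Prop :=
  redModel R Z Z ∧ ∀ M, Y ⊆ M → M ⊆ Z → redModel R Z M → M = Z

/-- The splitting set theorem of Lifschitz and Turner. -/
theorem stableModel_union_iff {Q R : Program α} {N Z : Set α}
    (hQ : ∀ r ∈ Q, ∀ x ∈ ruleAtoms r, x ∉ N) (hR : ∀ r ∈ R, r.head.atoms ⊆ N) :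
    StableModel (Q ∪ R) Z ↔ StableModel Q (Z \ N) ∧ StableAbove R (Z \ N) Z := by
  have hQcongr : ∀ {X₁ M₁ X₂ M₂ : Set α},
      (∀ x ∉ N, (x ∈ X₁ ↔ x ∈ X₂) ∧ (x ∈ M₁ ↔ x ∈ M₂)) →
        (redModel Q X₁ M₁ ↔ redModel Q X₂ M₂) :=
    fun h => redModel_congr fun r hr x hx => h x (hQ r hr x hx)
  have hdiff : ∀ {X : Set α} x, x ∉ N → (x ∈ X \ N ↔ x ∈ X) := fun x hx => by simp [hx]
  have hRshrink : ∀ {M}, (∀ x ∈ N, x ∈ Z → x ∈ M) → M ⊆ Z → redModel R Z Z → redModel R Z M :=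
    fun hNM hMZ hRZ r hr hb =>
      (Head.redSat_congr fun x hx => ⟨Iff.rfl, hNM x (hR r hr hx), fun h => hMZ h⟩).1
        (hRZ r hr fun l hl => ⟨(hb l hl).1, (hb l hl).1⟩)
  constructor
  · intro hZ
    have hQZ : redModel Q Z Z := fun r hr => hZ.1 r (Or.inl hr)
    refine ⟨⟨(hQcongr (X₂ := Z \ N) (M₂ := Z \ N) fun x hx =>
        ⟨(hdiff x hx).symm, (hdiff x hx).symm⟩).1 hQZ, fun M hM hQM => ?_⟩,
      fun r hr => hZ.1 r (Or.inr hr), fun M hM hMZ hRM => hZ.2 M hMZ ?_⟩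
    · have hWZ : M ∪ Z ∩ N ⊆ Z := Set.union_subset (hM.trans Set.sdiff_subset) Set.inter_subset_left
      have hW := hZ.2 _ hWZ fun r hr => hr.elim
        ((hQcongr (X₂ := Z) (M₂ := M ∪ Z ∩ N) fun x hx => ⟨hdiff x hx, by simp [hx]⟩).1 hQM r)
        (hRshrink (fun x hx hxZ => Or.inr ⟨hxZ, hx⟩) hWZ (fun r hr => hZ.1 r (Or.inr hr)) r)
      refine hM.antisymm fun x ⟨hxZ, hxN⟩ => ?_
      rw [← hW] at hxZ
      exact hxZ.resolve_right fun h => hxN h.2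
    · rintro r (hr | hr)
      · exact (hQcongr (X₂ := Z) (M₂ := M) fun x hx =>
          ⟨Iff.rfl, fun h => hM ⟨h, hx⟩, fun h => hMZ h⟩).1 hQZ r hr
      · exact hRM r hr
  · rintro ⟨hQs, hRZ, hRmin⟩
    refine ⟨fun r hr => hr.elim ((hQcongr (X₂ := Z) (M₂ := Z) fun x hx =>
        ⟨hdiff x hx, hdiff x hx⟩).1 hQs.1 r) (hRZ r),
      fun M hMZ hM => hRmin M ?_ hMZ fun r hr => hM r (Or.inr hr)⟩
    have hMN := hQs.2 (M \ N) (Set.sdiff_subset_sdiff_left hMZ)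
      ((hQcongr (X₂ := Z \ N) (M₂ := M \ N) fun x hx =>
        ⟨(hdiff x hx).symm, (hdiff x hx).symm⟩).1 fun r hr => hM r (Or.inl hr))
    exact fun x hx => (hMN ▸ hx).1

lemma stableModel_factsOf_iff {X Z : Set α} : StableModel (factsOf X) Z ↔ Z = X := by
  have hfact : ∀ x ∈ X, (⟨Head.atom x, ∅⟩ : Rule α) ∈ factsOf X := fun x hx => ⟨x, hx, rfl⟩
  have hmodel : ∀ {M}, redModel (factsOf X) Z M ↔ X ⊆ Z ∧ X ⊆ M := by
    refine ⟨fun h => ⟨fun x hx => (h _ (hfact x hx) fun _ hl => hl.elim).1,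
      fun x hx => (h _ (hfact x hx) fun _ hl => hl.elim).2⟩, ?_⟩
    rintro ⟨hXZ, hXM⟩ _ ⟨x, hx, rfl⟩ -
    exact ⟨hXZ hx, hXM hx⟩
  simp only [StableModel, hmodel]
  constructor
  · rintro ⟨⟨hXZ, -⟩, hmin⟩
    exact (hmin X hXZ ⟨hXZ, subset_rfl⟩).symm
  · rintro rfl
    exact ⟨⟨subset_rfl, subset_rfl⟩, fun M hMX h => hMX.antisymm h.2⟩

lemma stableAbove_iff_of_forall_not_sat {R : Program α} {Y Z : Set α}
    (hR : ∀ r ∈ R, ∃ l ∈ r.body, ¬ l.sat Z) (hYZ : Y ⊆ Z) : StableAbove R Y Z ↔ Z = Y := by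
  have hmodel : ∀ M, redModel R Z M := fun M r hr hb => by
    obtain ⟨l, hl, hlZ⟩ := hR r hr
    exact (hlZ (hb l hl).1).elim
  exact ⟨fun h => (h.2 Y subset_rfl hYZ (hmodel Y)).symm,
    fun h => ⟨hmodel Z, fun M hYM hMZ _ => hMZ.antisymm (h ▸ hYM)⟩⟩

lemma disjoint_of_stableModel {P : Program α} {Z N : Set α} (hZ : StableModel P Z)
    (hP : ∀ r ∈ P, ∀ x ∈ ruleAtoms r, x ∉ N) : Disjoint Z N :=
  Set.disjoint_left.2 fun _ hx => by
    obtain ⟨r, hr, hxr⟩ := exists_head_of_mem_stableModel hZ hx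
    exact hP r hr _ (.inl hxr)

section Image

variable {γ : Type*} {g : γ → α} {Y : Set α}

lemma apply_mem_union_image_iff (hg : Function.Injective g) (hY : Disjoint Y (Set.range g))
    {u : Set γ} {c : γ} : g c ∈ Y ∪ g '' u ↔ c ∈ u := by
  simp [hg.mem_set_image, Set.disjoint_right.1 hY ⟨c, rfl⟩]

lemma diff_range_eq_iff (hY : Disjoint Y (Set.range g)) {Z : Set α} :
    Z \ Set.range g = Y ↔ ∃ u, Z = Y ∪ g '' u := by
  constructor
  · rintro rfl
    exact ⟨g ⁻¹' Z, by rw [Set.image_preimage_eq_inter_range, Set.sdiff_union_inter]⟩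
  · rintro ⟨u, rfl⟩
    rw [Set.union_sdiff_distrib, hY.sdiff_eq_left,
      Set.sdiff_eq_empty.2 (Set.image_subset_range g u), Set.union_empty]

lemma stableAbove_union_image_iff (hg : Function.Injective g) {R : Program α}
    (hY : Disjoint Y (Set.range g)) {t : Set γ} :
    StableAbove R Y (Y ∪ g '' t) ↔ redModel R (Y ∪ g '' t) (Y ∪ g '' t) ∧
      ∀ u ⊆ t, redModel R (Y ∪ g '' t) (Y ∪ g '' u) → u = t := by
  have hpre : ∀ u, g ⁻¹' (Y ∪ g '' u) = u := fun u =>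
    Set.ext fun _ => apply_mem_union_image_iff hg hY
  refine and_congr_right fun _ => ⟨fun h u hut hu => ?_, fun h M hYM hMZ hM => ?_⟩
  · have := h _ Set.subset_union_left (Set.union_subset_union_right _ (Set.image_mono hut)) hu
    rw [← hpre u, this, hpre]
  · have hM' : M = Y ∪ g '' (g ⁻¹' M) := by
      refine le_antisymm (fun x hx => ?_) (Set.union_subset hYM (Set.image_preimage_subset g M))
      rcases hMZ hx with hxY | ⟨y, -, rfl⟩
      exacts [Or.inl hxY, Or.inr ⟨y, hx, rfl⟩]
    rw [hM'] at hM ⊢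
    rw [h _ ((Set.preimage_mono hMZ).trans (hpre t).le) hM]

end Image

end General

section Planning

variable {F A : Type*}

/-- The time step of an atom of the encoding (`0` for atoms without one). -/
def PAtom.time : PAtom F A → ℕ
  | .h _ i => i
  | .occ _ i => i
  | .alpha i => i
  | _ => 0

lemma OccAt_eq_range (j : ℕ) : OccAt F A j = Set.range (PAtom.occ · j) := by
  ext x
  simp [OccAt, eq_comm]

lemma ruleAtoms_alphaAt {j : ℕ} {r : Rule (PAtom F A)} (hr : r ∈ alphaAt F A j)
    {x : PAtom F A} (hx : x ∈ ruleAtoms r) :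
    x = .alpha j ∨ x = .t j ∨ x = .alpha (j - 1) := by
  rw [alphaAt, Set.mem_singleton_iff] at hr
  subst hr
  simp [ruleAtoms, Head.atoms, Lit.atomOf] at hx
  grind

lemma ruleAtoms_generateAt {j : ℕ} {r : Rule (PAtom F A)} (hr : r ∈ generateAt F A j)
    {x : PAtom F A} (hx : x ∈ ruleAtoms r) : x ∈ OccAt F A j ∨ x = .t j := by
  rcases hr with ⟨b, rfl⟩ | ⟨b, c, -, rfl⟩ | rfl <;>
    simp [ruleAtoms, Head.atoms, Lit.atomOf] at hx <;> aesop (add norm OccAt)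

lemma DynRules.isFlu {DR : Program (PAtom F A)} (hDR : DynRules DR) {r : Rule (PAtom F A)}
    (hr : r ∈ DR) {x : PAtom F A} (hx : x ∈ r.head.atoms) : isFlu x := by
  cases hH : r.head <;> rw [hH] at hx <;> cases hx
  exacts [(hDR r hr).1 _ (Or.inl hH), (hDR r hr).1 _ (Or.inr hH)]

lemma DynRules.isDynBody {DR : Program (PAtom F A)} (hDR : DynRules DR) {r : Rule (PAtom F A)}
    (hr : r ∈ DR) {x : PAtom F A} (hx : x ∈ ruleAtoms r) : isDynBody x := by
  rcases hx with hx | ⟨l, hl, rfl⟩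
  · have := hDR.isFlu hr hx
    cases x <;> trivial
  · exact (hDR r hr).2 l hl

lemma mem_tttDyn_iff {DR : Program (PAtom F A)} {j : ℕ} {r : Rule (PAtom F A)} :
    r ∈ tttDyn DR j ↔ ∃ r₀ ∈ DR, r = ⟨mapHead (renDyn j) r₀.head,
      mapLit (renDyn j) '' r₀.body ∪ {.pos (.t j)} ∪ {.neg (.alpha j)}⟩ := by
  simp [tttDyn, ttDyn, addBody, mapProg, mapRule]

lemma ruleAtoms_tttDyn {DR : Program (PAtom F A)} {j : ℕ} {r : Rule (PAtom F A)}
    (hr : r ∈ tttDyn DR j) {x : PAtom F A} (hx : x ∈ ruleAtoms r) :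
    x = .alpha j ∨ x = .t j ∨ ∃ r₀ ∈ DR, ∃ y ∈ ruleAtoms r₀, x = renDyn j y := by
  obtain ⟨r₀, hr₀, rfl⟩ := mem_tttDyn_iff.1 hr
  have hhead : ∀ H : Head (PAtom F A), (mapHead (renDyn j) H).atoms = renDyn j '' H.atoms := by
    intro H; cases H <;> simp [mapHead, Head.atoms]
  have hlit : ∀ l : Lit (PAtom F A), (mapLit (renDyn j) l).atomOf = renDyn j l.atomOf := by
    intro l; cases l <;> rfl
  simp only [ruleAtoms, hhead, Set.image_union, Set.image_image, hlit] at hx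
  rcases hx with ⟨y, hy, rfl⟩ | ((⟨l, hl, rfl⟩ | ⟨_, rfl, rfl⟩) | ⟨_, rfl, rfl⟩)
  exacts [.inr (.inr ⟨r₀, hr₀, y, .inl hy, rfl⟩),
    .inr (.inr ⟨r₀, hr₀, l.atomOf, .inr ⟨l, hl, rfl⟩, rfl⟩), .inr (.inl rfl), .inl rfl]

lemma tttDyn_head_atoms_subset {DR : Program (PAtom F A)} (hDR : DynRules DR) {j : ℕ}
    {r : Rule (PAtom F A)} (hr : r ∈ tttDyn DR j) : r.head.atoms ⊆ Set.range (PAtom.h · j) := by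
  obtain ⟨r₀, hr₀, rfl⟩ := mem_tttDyn_iff.1 hr
  intro x hx
  cases hH : r₀.head with
  | bot => simp [hH, mapHead, Head.atoms] at hx
  | atom p | choice p =>
    have hp : isFlu p := (hDR r₀ hr₀).1 p (by simp [headAtomIs, hH])
    cases p <;> simp_all [mapHead, Head.atoms, isFlu, renDyn]

lemma time_renDyn_le {j : ℕ} {y : PAtom F A} (hy : isDynBody y) : (renDyn j y).time ≤ j := by
  cases y <;> simp_all [isDynBody, renDyn, PAtom.time]

lemma time_le_of_mem_ruleAtoms_CPstep {DR : Program (PAtom F A)} (hDR : DynRules DR) {k : ℕ}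
    {r : Rule (PAtom F A)} (hr : r ∈ CPstep DR k) {x : PAtom F A} (hx : x ∈ ruleAtoms r) :
    x.time ≤ k := by
  rcases hr with (hr | hr) | hr
  · rcases ruleAtoms_alphaAt hr hx with rfl | rfl | rfl <;> simp [PAtom.time]
  · rcases ruleAtoms_generateAt hr hx with ⟨c, rfl⟩ | rfl <;> simp [PAtom.time]
  · rcases ruleAtoms_tttDyn hr hx with rfl | rfl | ⟨r₀, hr₀, y, hy, rfl⟩
    · simp [PAtom.time]
    · simp [PAtom.time]
    · exact time_renDyn_le (hDR.isDynBody hr₀ hy)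

lemma time_le_of_mem_heads_CPinit {DR IR : Program (PAtom F A)} (hDR : DynRules DR)
    (hIR : InitRules IR) {n m : ℕ} {r : Rule (PAtom F A)} (hr : r ∈ CPinit DR IR n m)
    {x : PAtom F A} (hx : x ∈ r.head.atoms) : x.time ≤ m := by
  rcases hr with (hr | hr) | hr
  · rcases hr with ⟨k, -, -, rfl⟩ | ⟨b, rfl⟩ <;> simp_all [Head.atoms, PAtom.time]
  · obtain ⟨_, ⟨r₀, hr₀, rfl⟩, rfl⟩ := hr
    obtain ⟨H, B⟩ := r₀
    cases H with
    | bot => simp_all [replBotHead, mapRule, mapHead, Head.atoms, PAtom.time]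
    | atom p | choice p =>
      have hp : isFlu p := (hIR _ hr₀).1 p (by simp [headAtomIs])
      cases p <;> simp_all [replBotHead, mapRule, mapHead, Head.atoms, isFlu, renInit, PAtom.time]
  · obtain ⟨k, ⟨-, hkm⟩, hr⟩ := Set.mem_iUnion₂.1 hr
    exact (time_le_of_mem_ruleAtoms_CPstep hDR hr (.inl hx)).trans hkm

end Planning

section Transition

variable {F A : Type*} {DR : Program (PAtom F A)} {s t : Set F} {a : A}

/-- The facts `s' ∪ {a}` of the program `s' ∪ {a} ∪ DR` defining `τ(s,a)`. -/
def transInput (s : Set F) (a : A) : Set (PAtom F A) := insert (.act a) (fluPSet s)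

def IsSuccessor (DR : Program (PAtom F A)) (s : Set F) (a : A) (t : Set F) : Prop :=
  StableAbove DR (transInput s a) (transInput s a ∪ PAtom.flu '' t)

lemma stateProg_union_actProg : stateProg s ∪ actProg a = factsOf (transInput s a) := by
  ext r
  simp only [stateProg, actProg, factsOf, transInput, Set.mem_union, Set.mem_singleton_iff,
    Set.mem_ofPred_eq, Set.exists_mem_insert]
  exact Or.comm

lemma disjoint_transInput_range_flu : Disjoint (transInput s a) (Set.range PAtom.flu) := by
  rw [Set.disjoint_right]
  rintro _ ⟨f, rfl⟩ (h | ⟨g, -, h⟩) <;> cases h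

lemma PAtom.flu_injective : Function.Injective (PAtom.flu : F → PAtom F A) :=
  fun _ _ h => by injection h

theorem stableModel_transProg_iff (hDR : DynRules DR) {M : Set (PAtom F A)} :
    StableModel (stateProg s ∪ actProg a ∪ DR) M ↔
      ∃ t, M = transInput s a ∪ PAtom.flu '' t ∧ IsSuccessor DR s a t := by
  have hQ : ∀ r ∈ factsOf (transInput s a), ∀ x ∈ ruleAtoms r, x ∉ Set.range PAtom.flu := by
    rintro r ⟨y, hy, rfl⟩ x hx
    simp only [ruleAtoms, Head.atoms, Set.image_empty, Set.union_empty,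
      Set.mem_singleton_iff] at hx
    exact Set.disjoint_left.1 disjoint_transInput_range_flu (hx ▸ hy)
  have hR : ∀ r ∈ DR, r.head.atoms ⊆ Set.range PAtom.flu := fun r hr x hx => by
    have := hDR.isFlu hr hx
    cases x <;> simp_all [isFlu]
  rw [stateProg_union_actProg, stableModel_union_iff hQ hR, stableModel_factsOf_iff]
  constructor
  · rintro ⟨h1, h2⟩
    obtain ⟨t, rfl⟩ := (diff_range_eq_iff disjoint_transInput_range_flu).1 h1
    rw [h1] at h2
    exact ⟨t, rfl, h2⟩
  · rintro ⟨t, rfl, ht⟩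
    have h1 : (transInput s a ∪ PAtom.flu '' t) \ Set.range PAtom.flu = transInput s a :=
      (diff_range_eq_iff disjoint_transInput_range_flu).2 ⟨t, rfl⟩
    rw [h1]
    exact ⟨rfl, ht⟩

theorem tauDR_eq_some_iff (hDR : DynRules DR) (hdet : Deterministic DR) :
    tauDR DR s a = some t ↔ IsSuccessor DR s a t := by
  have hflu : ∀ u, {f | PAtom.flu f ∈ transInput s a ∪ PAtom.flu '' u} = u := fun u =>
    Set.ext fun _ => apply_mem_union_image_iff PAtom.flu_injective disjoint_transInput_range_flu
  constructor
  · intro h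
    rw [tauDR] at h
    split_ifs at h with hex
    obtain ⟨u, hM, hu⟩ := (stableModel_transProg_iff hDR).1 hex.choose_spec.1
    rw [Option.some_inj, hM, hflu] at h
    exact h ▸ hu
  · intro ht
    have hM := (stableModel_transProg_iff hDR).2 ⟨t, rfl, ht⟩
    have hex : ∃! M, StableModel (stateProg s ∪ actProg a ∪ DR) M :=
      ⟨_, hM, fun M h => hdet s a h hM⟩
    rw [tauDR, dif_pos hex, hdet s a hex.choose_spec.1 hM, hflu]

end Transition

section Step

variable {F A : Type*} {DR Q : Program (PAtom F A)} {j : ℕ} {a : A} {Z : Set (PAtom F A)}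

lemma time_lt_of_stableModel {Y : Set (PAtom F A)} (hY : StableModel Q Y)
    (hQ : ∀ r ∈ Q, ∀ x ∈ ruleAtoms r, x.time < j) : ∀ x ∈ Y, x.time < j := fun x hx => by
  obtain ⟨r, hr, hxr⟩ := exists_head_of_mem_stableModel hY hx
  exact hQ r hr x (.inl hxr)

theorem stableModel_union_alphaAt_iff (hj : 1 ≤ j)
    (hQ : ∀ r ∈ Q, ∀ x ∈ ruleAtoms r, x ≠ .alpha j)
    (hQY : ∀ Y, StableModel Q Y → .alpha (j - 1) ∉ Y) :
    StableModel (Q ∪ alphaAt F A j) Z ↔ StableModel Q Z := by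
  have hR : ∀ r ∈ alphaAt F A j, r.head.atoms ⊆ {.alpha j} := by
    rintro r rfl
    simp [Head.atoms]
  have hblocked : ∀ {M}, .alpha (j - 1) ∉ M →
      ∀ r ∈ alphaAt F A j, ∃ l ∈ r.body, ¬ l.sat M := by
    rintro M hM r rfl
    exact ⟨.pos (.alpha (j - 1)), by simp, hM⟩
  rw [stableModel_union_iff (N := {.alpha j}) hQ hR]
  constructor
  · rintro ⟨hQs, hab⟩
    have hα : PAtom.alpha (j - 1) ∉ Z := fun h => hQY _ hQs ⟨h, by simp; omega⟩
    rw [stableAbove_iff_of_forall_not_sat (hblocked hα) Set.sdiff_subset] at hab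
    rwa [← hab] at hQs
  · intro hZ
    rw [(disjoint_of_stableModel (N := {.alpha j}) hZ hQ).sdiff_eq_left]
    exact ⟨hZ, (stableAbove_iff_of_forall_not_sat (hblocked (hQY Z hZ)) subset_rfl).2 rfl⟩

lemma PAtom.occ_left_injective (j : ℕ) : Function.Injective (PAtom.occ · j : A → PAtom F A) :=
  fun _ _ h => by injection h

theorem stableAbove_generateAt_iff {Y : Set (PAtom F A)} (htY : .t j ∈ Y)
    (hY : Disjoint Y (Set.range (PAtom.occ · j))) {u : Set A} :
    StableAbove (generateAt F A j ∪ fixcons {.occ a j} (OccAt F A j)) Y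
      (Y ∪ (PAtom.occ · j) '' u) ↔ u = {a} := by
  have hmem : ∀ {v : Set A} {b : A}, PAtom.occ b j ∈ Y ∪ (PAtom.occ · j) '' v ↔ b ∈ v :=
    apply_mem_union_image_iff (PAtom.occ_left_injective j) hY
  have hchoice : (⟨.choice (.occ a j), {.pos (.t j)}⟩ : Rule (PAtom F A)) ∈
      generateAt F A j ∪ fixcons {.occ a j} (OccAt F A j) := .inl (.inl ⟨a, rfl⟩)
  rw [stableAbove_union_image_iff (PAtom.occ_left_injective j) hY]
  constructor
  · rintro ⟨h, -⟩
    refine Set.eq_singleton_iff_unique_mem.2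
      ⟨by_contra fun ha => ?_, fun b hb => by_contra fun hba => ?_⟩
    · exact h _ (.inr (.inl ⟨_, rfl, rfl⟩)) fun l hl => by
        rw [Set.mem_singleton_iff.1 hl]
        exact ⟨mt hmem.1 ha, mt hmem.1 ha⟩
    · refine h ⟨.bot, {.pos (.occ b j)}⟩ (.inr (.inr ⟨_, ⟨⟨b, rfl⟩, ?_⟩, rfl⟩)) fun l hl => ?_
      · simpa using hba
      · rw [Set.mem_singleton_iff.1 hl]
        exact ⟨hmem.2 hb, hmem.2 hb⟩
  · rintro rfl
    refine ⟨?_, fun v hv h => hv.antisymm (Set.singleton_subset_iff.2 ?_)⟩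
    · rintro r ((⟨b, rfl⟩ | ⟨b, c, hbc, rfl⟩ | rfl) | (⟨x, hx, rfl⟩ | ⟨_, ⟨⟨b, rfl⟩, hb⟩, rfl⟩))
        hbody
      · exact (em _).elim (fun h => .inl ⟨h, h⟩) fun h => .inr ⟨h, h⟩
      · have hb : b = a := (hmem (v := {a})).1 (hbody (.pos (.occ b j)) (by simp)).1
        have hc : c = a := (hmem (v := {a})).1 (hbody (.pos (.occ c j)) (by simp)).1
        exact hbc (hb.trans hc.symm)
      · exact (hbody (.neg (.occ a j)) (.inr ⟨a, rfl⟩)).1 (hmem.2 rfl)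
      · rw [Set.mem_singleton_iff.1 hx] at hbody
        exact (hbody _ rfl).1 (hmem.2 rfl)
      · have hba : b = a := (hmem (v := {a})).1 (hbody _ rfl).1
        exact hb (hba ▸ rfl)
    · have := h _ hchoice fun l hl => by
        rw [Set.mem_singleton_iff.1 hl]
        exact ⟨.inl htY, .inl htY⟩
      rcases this with ⟨-, h'⟩ | ⟨h', -⟩
      exacts [hmem.1 h', (h' (hmem.2 rfl)).elim]

theorem stableModel_union_generateAt_iff (hQ : ∀ r ∈ Q, ∀ x ∈ ruleAtoms r, x ∉ OccAt F A j)
    (hQY : ∀ Y, StableModel Q Y → .t j ∈ Y) :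
    StableModel (Q ∪ (generateAt F A j ∪ fixcons {.occ a j} (OccAt F A j))) Z ↔
      ∃ Y, StableModel Q Y ∧ Z = insert (.occ a j) Y := by
  rw [OccAt_eq_range] at hQ
  have hR : ∀ r ∈ generateAt F A j ∪ fixcons {.occ a j} (OccAt F A j),
      r.head.atoms ⊆ Set.range (PAtom.occ · j) := by
    rintro r ((⟨b, rfl⟩ | ⟨b, c, -, rfl⟩ | rfl) | (⟨x, -, rfl⟩ | ⟨x, -, rfl⟩)) <;>
      simp [Head.atoms]
  have hins : ∀ Y : Set (PAtom F A), insert (.occ a j) Y = Y ∪ (PAtom.occ · j) '' {a} := by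
    simp [Set.union_singleton]
  rw [stableModel_union_iff hQ hR]
  constructor
  · rintro ⟨hQs, hab⟩
    generalize hY : Z \ Set.range (PAtom.occ · j) = Y at hQs hab
    have hdisj := disjoint_of_stableModel hQs hQ
    obtain ⟨u, rfl⟩ := (diff_range_eq_iff hdisj).1 hY
    rw [stableAbove_generateAt_iff (hQY Y hQs) hdisj] at hab
    exact ⟨Y, hQs, by rw [hab, hins]⟩
  · rintro ⟨Y, hQs, rfl⟩
    have hdisj := disjoint_of_stableModel hQs hQ
    rw [hins, (diff_range_eq_iff hdisj).2 ⟨_, rfl⟩, stableAbove_generateAt_iff (hQY Y hQs) hdisj]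
    exact ⟨hQs, rfl⟩

lemma PAtom.h_left_injective (j : ℕ) : Function.Injective (PAtom.h · j : F → PAtom F A) :=
  fun _ _ h => by injection h

lemma renDyn_mem_iff {Y : Set (PAtom F A)} (hj : 1 ≤ j) (hY : ∀ x ∈ Y, x.time < j)
    {x : PAtom F A} (hx : isDynBody x) (u : Set F) :
    renDyn j x ∈ insert (.occ a j) Y ∪ (PAtom.h · j) '' u ↔
      x ∈ transInput {f | PAtom.h f (j - 1) ∈ Y} a ∪ PAtom.flu '' u := by
  cases x <;> simp [renDyn, transInput, fluPSet, isDynBody] at hx ⊢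
  · exact fun h => absurd (hY _ h) (by simp [PAtom.time])
  · omega
  · exact fun h => absurd (hY _ h) (by simp [PAtom.time])

lemma disjoint_insert_occ {Y : Set (PAtom F A)} (hY : ∀ x ∈ Y, x.time < j) :
    Disjoint (insert (.occ a j) Y) (Set.range (PAtom.h · j)) := by
  refine Set.disjoint_right.2 ?_
  rintro _ ⟨f, rfl⟩ (h | h)
  · cases h
  · exact (hY _ h).ne rfl

lemma alpha_not_mem_insert_occ_union {Y : Set (PAtom F A)} (hY : ∀ x ∈ Y, x.time < j)
    {t : Set F} : .alpha j ∉ insert (.occ a j) Y ∪ (PAtom.h · j) '' t := by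
  rintro ((h | h) | ⟨_, -, h⟩)
  · cases h
  · exact (hY _ h).ne rfl
  · cases h

theorem stableAbove_tttDyn_iff (hDR : DynRules DR) {Y : Set (PAtom F A)} (hj : 1 ≤ j)
    (hY : ∀ x ∈ Y, x.time < j) (htY : .t j ∈ Y) {t : Set F} :
    StableAbove (tttDyn DR j) (insert (.occ a j) Y) (insert (.occ a j) Y ∪ (PAtom.h · j) '' t) ↔
      IsSuccessor DR {f | PAtom.h f (j - 1) ∈ Y} a t := by
  have hred : ∀ u v : Set F,
      redModel (tttDyn DR j) (insert (.occ a j) Y ∪ (PAtom.h · j) '' u)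
        (insert (.occ a j) Y ∪ (PAtom.h · j) '' v) ↔
      redModel DR (transInput {f | PAtom.h f (j - 1) ∈ Y} a ∪ PAtom.flu '' u)
        (transInput {f | PAtom.h f (j - 1) ∈ Y} a ∪ PAtom.flu '' v) := by
    intro u v
    rw [tttDyn, redModel_addBody_iff, ttDyn, redModel_addBody_iff]
    · exact redModel_mapProg_iff fun r hr x hx =>
        ⟨renDyn_mem_iff hj hY (hDR.isDynBody hr hx) u, renDyn_mem_iff hj hY (hDR.isDynBody hr hx) v⟩
    · rintro l rfl
      exact ⟨.inl (.inr htY), .inl (.inr htY)⟩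
    · rintro l rfl
      exact ⟨alpha_not_mem_insert_occ_union hY, alpha_not_mem_insert_occ_union hY⟩
  rw [IsSuccessor, stableAbove_union_image_iff (PAtom.h_left_injective j) (disjoint_insert_occ hY),
    stableAbove_union_image_iff PAtom.flu_injective disjoint_transInput_range_flu]
  simp only [hred]

theorem stableModel_union_alphaAt_union_generateAt_iff (hj : 1 ≤ j)
    (hQ : ∀ r ∈ Q, ∀ x ∈ ruleAtoms r, x.time < j)
    (hQY : ∀ Y, StableModel Q Y → .t j ∈ Y ∧ .alpha (j - 1) ∉ Y) :
    StableModel ((Q ∪ alphaAt F A j) ∪ (generateAt F A j ∪ fixcons {.occ a j} (OccAt F A j))) Z ↔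
      ∃ Y, StableModel Q Y ∧ Z = insert (.occ a j) Y := by
  have hQ1 : ∀ Y, StableModel (Q ∪ alphaAt F A j) Y ↔ StableModel Q Y := fun Y =>
    stableModel_union_alphaAt_iff hj (fun r hr x hx h => (hQ r hr x hx).ne (h ▸ rfl))
      fun Y hY => (hQY Y hY).2
  rw [stableModel_union_generateAt_iff]
  · simp only [hQ1]
  · rintro r (hr | hr) x hx ⟨b, rfl⟩
    · exact (hQ r hr _ hx).ne rfl
    · rcases ruleAtoms_alphaAt hr hx with h | h | h <;> cases h
  · exact fun Y hY => (hQY Y ((hQ1 Y).1 hY)).1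

theorem stableModel_union_stepProg_iff (hDR : DynRules DR) (hj : 1 ≤ j)
    (hQ : ∀ r ∈ Q, ∀ x ∈ ruleAtoms r, x.time < j)
    (hQY : ∀ Y, StableModel Q Y → .t j ∈ Y ∧ .alpha (j - 1) ∉ Y) :
    StableModel (Q ∪ (CPstep DR j ∪ fixcons {.occ a j} (OccAt F A j))) Z ↔
      ∃ Y t, StableModel Q Y ∧ IsSuccessor DR {f | PAtom.h f (j - 1) ∈ Y} a t ∧
        Z = insert (.occ a j) Y ∪ (PAtom.h · j) '' t := by
  have hprog : Q ∪ (CPstep DR j ∪ fixcons {.occ a j} (OccAt F A j)) =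
      ((Q ∪ alphaAt F A j) ∪ (generateAt F A j ∪ fixcons {.occ a j} (OccAt F A j))) ∪
        tttDyn DR j := by
    simp only [CPstep, Set.union_assoc, Set.union_comm, Set.union_left_comm]
  have hYtime : ∀ {Y}, StableModel Q Y → ∀ x ∈ Y, x.time < j := fun hY =>
    time_lt_of_stableModel hY hQ
  have hQ3 : ∀ r ∈ (Q ∪ alphaAt F A j) ∪ (generateAt F A j ∪ fixcons {.occ a j} (OccAt F A j)),
      ∀ x ∈ ruleAtoms r, x ∉ Set.range (PAtom.h · j) := by
    rintro r ((hr | hr) | hr | hr) x hx ⟨f, rfl⟩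
    · exact (hQ r hr _ hx).ne rfl
    · rcases ruleAtoms_alphaAt hr hx with h | h | h <;> cases h
    · rcases ruleAtoms_generateAt hr hx with ⟨b, h⟩ | h <;> cases h
    · rcases ruleAtoms_fixcons hr hx with h | ⟨b, h⟩ <;> cases h
  rw [hprog, stableModel_union_iff hQ3 fun r => tttDyn_head_atoms_subset hDR,
    stableModel_union_alphaAt_union_generateAt_iff hj hQ hQY]
  constructor
  · rintro ⟨⟨Y, hYs, hY⟩, hab⟩
    obtain ⟨t, rfl⟩ := (diff_range_eq_iff (disjoint_insert_occ (hYtime hYs))).1 hY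
    rw [hY, stableAbove_tttDyn_iff hDR hj (hYtime hYs) (hQY Y hYs).1] at hab
    exact ⟨Y, t, hYs, hab, rfl⟩
  · rintro ⟨Y, t, hYs, ht, rfl⟩
    rw [(diff_range_eq_iff (disjoint_insert_occ (hYtime hYs))).2 ⟨t, rfl⟩,
      stableAbove_tttDyn_iff hDR hj (hYtime hYs) (hQY Y hYs).1]
    exact ⟨⟨Y, hYs, rfl⟩, ht⟩

theorem stableModel_union_stepProg_iff_tauDR (hDR : DynRules DR) (hdet : Deterministic DR)
    (hj : 1 ≤ j) (hQ : ∀ r ∈ Q, ∀ x ∈ ruleAtoms r, x.time < j) {Y : Set (PAtom F A)}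
    (hY : ∀ W, StableModel Q W ↔ W = Y) (htY : .t j ∈ Y) (hαY : .alpha (j - 1) ∉ Y) :
    StableModel (Q ∪ (CPstep DR j ∪ fixcons {.occ a j} (OccAt F A j))) Z ↔
      ∃ t, tauDR DR {f | PAtom.h f (j - 1) ∈ Y} a = some t ∧
        Z = insert (.occ a j) Y ∪ (PAtom.h · j) '' t := by
  rw [stableModel_union_stepProg_iff hDR hj hQ fun W hW => (hY W).1 hW ▸ ⟨htY, hαY⟩]
  simp only [hY, exists_and_left, exists_eq_left, tauDR_eq_some_iff hDR hdet]

end Step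

section MultiStep

variable {F A : Type*} {DR : Program (PAtom F A)} {X : Set (PAtom F A)} {i : ℕ}

@[simp]
lemma multiStepProg_nil : multiStepProg DR X ([] : List A) i = factsOf X := by
  simp [multiStepProg]

lemma multiStepProg_concat (p : List A) (a : A) :
    multiStepProg DR X (p ++ [a]) i = multiStepProg DR X p i ∪
      (CPstep DR (i + p.length) ∪ fixcons {.occ a (i + p.length)} (OccAt F A (i + p.length))) := by
  ext r
  simp only [multiStepProg, Set.mem_union, Set.mem_iUnion, Fin.exists_iff, List.length_append,
    List.length_singleton, Nat.lt_succ_iff_lt_or_eq, List.get_eq_getElem]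
  constructor
  · rintro (h | ⟨k, hk | rfl, h⟩)
    · exact .inl (.inl h)
    · rw [List.getElem_append_left hk] at h
      exact .inl (.inr ⟨k, hk, h⟩)
    · simp only [List.getElem_concat_length] at h
      exact .inr h
  · rintro ((h | ⟨k, hk, h⟩) | h)
    · exact .inl h
    · exact .inr ⟨k, .inl hk, by rwa [List.getElem_append_left hk]⟩
    · exact .inr ⟨p.length, .inr rfl, by simpa using h⟩

lemma time_lt_of_mem_ruleAtoms_multiStepProg (hDR : DynRules DR) (hX : ∀ x ∈ X, x.time < i)
    {p : List A} {r : Rule (PAtom F A)} (hr : r ∈ multiStepProg DR X p i) {x : PAtom F A}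
    (hx : x ∈ ruleAtoms r) : x.time < i + p.length := by
  rcases hr with ⟨y, hy, rfl⟩ | hr
  · simp only [ruleAtoms, Head.atoms, Set.image_empty, Set.union_empty,
      Set.mem_singleton_iff] at hx
    exact hx ▸ (hX y hy).trans_le (Nat.le_add_right i p.length)
  · obtain ⟨k, hr⟩ := Set.mem_iUnion.1 hr
    have hk : x.time ≤ i + k := by
      rcases hr with hr | hr
      · exact time_le_of_mem_ruleAtoms_CPstep hDR hr hx
      · rcases ruleAtoms_fixcons hr hx with rfl | ⟨b, rfl⟩ <;> rfl
    have := k.isLt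
    omega

lemma tauSet_singleton (τ : Set F → A → Option (Set F)) (s : Set F) (a : A) :
    tauSet τ {s} a = (τ s a).map ({·}) := by
  cases h : τ s a <;> simp [tauSet, h]

lemma tauList_concat (τ : Set F → A → Option (Set F)) (p : List A) (a : A) (S : Set (Set F)) :
    tauList τ (p ++ [a]) S = (tauList τ p S).bind (tauSet τ · a) := by
  induction p generalizing S with
  | nil =>
    show (tauSet τ S a).bind (tauList τ []) = tauSet τ S a
    cases tauSet τ S a <;> rfl
  | cons b q ih =>
    show (tauSet τ S b).bind _ = ((tauSet τ S b).bind _).bind _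
    cases tauSet τ S b
    · rfl
    · exact ih _

theorem tauList_multiStepProg {IR : Program (PAtom F A)} {n : ℕ} (hDR : DynRules DR)
    (hIR : InitRules IR) (hdet : Deterministic DR) (hi : 1 ≤ i)
    (hX : StableModel (CPinit DR IR n (i - 1)) X) (hα : .alpha (i - 1) ∉ X)
    (p : List A) (hp : i + p.length ≤ n + 1) :
    (tauList (tauDR DR) p {{f | PAtom.h f (i - 1) ∈ X}} = none ∧
        ∀ Z, ¬ StableModel (multiStepProg DR X p i) Z) ∨
      ∃ Y, (∀ Z, StableModel (multiStepProg DR X p i) Z ↔ Z = Y) ∧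
        tauList (tauDR DR) p {{f | PAtom.h f (i - 1) ∈ X}} =
          some {{f | PAtom.h f (i + p.length - 1) ∈ Y}} ∧
        .alpha (i + p.length - 1) ∉ Y := by
  have hXtime : ∀ x ∈ X, x.time < i := fun x hx => by
    obtain ⟨r, hr, hxr⟩ := exists_head_of_mem_stableModel hX hx
    have := time_le_of_mem_heads_CPinit hDR hIR hr hxr
    omega
  induction p using List.reverseRecOn with
  | nil => exact .inr ⟨X, fun Z => by rw [multiStepProg_nil, stableModel_factsOf_iff], rfl, hα⟩
  | append_singleton p a ih =>
    have hlen : i + (p ++ [a]).length - 1 = i + p.length := by simp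
    rw [hlen, multiStepProg_concat, tauList_concat]
    have hQ : ∀ r ∈ multiStepProg DR X p i, ∀ x ∈ ruleAtoms r, x.time < i + p.length :=
      fun r hr x hx => time_lt_of_mem_ruleAtoms_multiStepProg hDR hXtime hr hx
    -- `t(j)` is a fact of `CP'[0,i−1]`, so it lies in `X`, whose atoms are facts of the program
    have htY : ∀ Y, StableModel (multiStepProg DR X p i) Y → .t (i + p.length) ∈ Y := fun Y hY =>
      mem_of_stableModel_of_fact hY (.inl ⟨_, mem_of_stableModel_of_fact hX
        (.inl (.inl (.inl ⟨_, by omega, by omega, rfl⟩))), rfl⟩)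
    rcases ih (by simp at hp; omega) with ⟨hnone, hno⟩ | ⟨Y, hY, hτ, hαY⟩
    · refine .inl ⟨by rw [hnone]; rfl, fun Z hZ => ?_⟩
      obtain ⟨Y, -, hYs, -⟩ := (stableModel_union_stepProg_iff hDR (by omega) hQ
        fun Y hY => (hno Y hY).elim).1 hZ
      exact hno Y hYs
    · have hstep := fun Z => stableModel_union_stepProg_iff_tauDR (Z := Z) (a := a) hDR hdet
        (by omega) hQ hY (htY Y ((hY Y).2 rfl)) hαY
      rw [hτ, Option.bind_some, tauSet_singleton]
      cases hτa : tauDR DR {f | PAtom.h f (i + p.length - 1) ∈ Y} a with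
      | none => exact .inl ⟨rfl, fun Z hZ => by simp [hstep, hτa] at hZ⟩
      | some t =>
        have hYtime := time_lt_of_stableModel ((hY Y).2 rfl) hQ
        refine .inr ⟨insert (.occ a (i + p.length)) Y ∪ (PAtom.h · (i + p.length)) '' t,
          fun Z => by simp [hstep, hτa], ?_, alpha_not_mem_insert_occ_union hYtime⟩
        simp [apply_mem_union_image_iff (PAtom.h_left_injective _) (disjoint_insert_occ hYtime)]

end MultiStep

end ASP

open ASP in
theorem multi_step_correspondence_general {F A : Type*}
    (DR IR : Program (PAtom F A))
    (hDR : DynRules DR) (hIR : InitRules IR)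
    (hdet : Deterministic DR)
    (s s' : Set F) (p : List A) (i n : ℕ) (hi : 1 ≤ i)
    (hin : i + p.length - 1 ≤ n)
    (X : Set (PAtom F A))
    (hX : StableModel (CPinit DR IR n (i - 1)) X)
    (hs' : s' = {f | PAtom.h f (i - 1) ∈ X})
    (hal : PAtom.alpha (i - 1) ∉ X) :
    (tauList (tauDR DR) p {s'} = some {s} ↔
       ∃! Y, StableModel (multiStepProg DR X p i) Y ∧
         s = {f | PAtom.h f (i + p.length - 1) ∈ Y}) ∧
    (∀ Y, StableModel (multiStepProg DR X p i) Y →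
       s = {f | PAtom.h f (i + p.length - 1) ∈ Y} →
       PAtom.alpha (i + p.length - 1) ∉ Y) := by
  subst hs'
  rcases tauList_multiStepProg hDR hIR hdet hi hX hal p (by omega) with
    ⟨hnone, hno⟩ | ⟨Y, hY, hτ, hα⟩
  · simp [hnone, hno]
  · simp only [hτ, Option.some_inj, Set.singleton_eq_singleton_iff, hY]
    exact ⟨⟨fun h => ⟨Y, ⟨rfl, h.symm⟩, fun Z hZ => hZ.1⟩, fun ⟨Z, ⟨hZ, hs⟩, _⟩ => hZ ▸ hs.symm⟩,
      fun Z hZ _ => hZ ▸ hα⟩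

open ASP in
/-- Lemma 2 of the paper: correspondence between executing the plan `p` from the
state `s'` and the stable models of
`X ∪ ⋃_{j=i}^{i+n−1} (CP'[j] ∪ fixcons({occ(a_{j−i+1},j)}, Occ_j))`. -/
theorem multi_step_correspondence {F A : Type*} [Nonempty F] [Nonempty A]
    (DR IR GR : Program (PAtom F A))
    (hDR : DynRules DR) (hIR : InitRules IR) (hGR : GoalRules GR)
    (hdet : Deterministic DR) (hine : Inertial DR)
    (hInonempty : (statesOf IR).Nonempty) (hGnonempty : (goalStates GR).Nonempty)
    (s s' : Set F) (p : List A) (hp : p ≠ []) (i n : ℕ) (hi : 1 ≤ i)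
    (hin : i + p.length - 1 ≤ n)
    (X : Set (PAtom F A))
    (hX : StableModel (CPinit DR IR n (i - 1)) X)
    (hs' : s' = {f | PAtom.h f (i - 1) ∈ X})
    (hal : PAtom.alpha (i - 1) ∉ X) :
    (tauList (tauDR DR) p {s'} = some {s} ↔
       ∃! Y, StableModel (multiStepProg DR X p i) Y ∧
         s = {f | PAtom.h f (i + p.length - 1) ∈ Y}) ∧
    (∀ Y, StableModel (multiStepProg DR X p i) Y →
       s = {f | PAtom.h f (i + p.length - 1) ∈ Y} →
       PAtom.alpha (i + p.length - 1) ∉ Y) :=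
  multi_step_correspondence_general DR IR hDR hIR hdet s s' p i n hi hin X hX hs' hal
end
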